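/- arXiv:2402.03810 — 6 statements merged into one kernel-verified Lean document; each statement's English description precedes it below -/
import Mathlib

section
/- With the setup as in the context, if ∑_{j=1}^J min{ M_j^{(1)}, M_j^{(2)}/(4δ_j(1−δ_j)) } < 1, then ∑_{ā ∈ B_1 ∪ ⋯ ∪ B_J} P_J(ā) < 1, and consequently the collection A does not cover R, i.e. ⋃_{i=1}^m (a_i + I_i) ≠ R. (Here, for j with δ_j ∈ {0, 1/2} interpret M_j^{(2)}/(4δ_j(1−δ_j)) with the convention that the minimum is taken over the well-defined expressions, i.e. one may additionally assume δ_j ∈ (0, 1/2) for all j.) -/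
open scoped Classical

private lemma double_count {G : Type*} [Fintype G] (r : G → G → Prop)
    (hsymm : ∀ x y, r x y → r y x) (n : ℕ)
    (hn : ∀ y, (Finset.univ.filter (fun x => r x y)).card = n)
    (g : G → ℝ) (b : G → Prop)
    (hb : ∀ x y, r x y → b x → b y) :
    ∑ x ∈ Finset.univ.filter b, ∑ y ∈ Finset.univ.filter (fun y => r x y), g y
      = (n : ℝ) * ∑ y ∈ Finset.univ.filter b, g y := by
  have key : ∀ x : G, ∑ y ∈ Finset.univ.filter (fun y => r x y), g y
      = ∑ y : G, if r x y then g y else 0 := fun x => by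
    rw [Finset.sum_filter]
  calc ∑ x ∈ Finset.univ.filter b, ∑ y ∈ Finset.univ.filter (fun y => r x y), g y
      = ∑ x : G, ∑ y : G, if b x then (if r x y then g y else 0) else 0 := by
        rw [Finset.sum_filter]; exact Finset.sum_congr rfl fun x _ => by
          split <;> simp [key]
    _ = ∑ y : G, ∑ x : G, if b x then (if r x y then g y else 0) else 0 := Finset.sum_comm
    _ = ∑ y : G, if b y then (n : ℝ) * g y else 0 := by
        refine Finset.sum_congr rfl fun y _ => ?_
        by_cases hy : b y
        · simp only [hy, if_true]
          have : ∀ x : G, (if b x then (if r x y then g y else 0) else 0)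
              = if r x y then g y else 0 := fun x => by
            by_cases hr : r x y
            · have : b x := hb y x (hsymm x y hr) hy
              simp [hr, this]
            · simp [hr]
          rw [Finset.sum_congr rfl fun x _ => this x, ← Finset.sum_filter,
            Finset.sum_const, hn y]
          simp [mul_comm]
        · simp only [hy, if_false]
          refine Finset.sum_eq_zero fun x _ => ?_
          by_cases hx : b x
          · by_cases hr : r x y
            · exact absurd (hb x y hr hx) hy
            · simp [hr, hx]
          · simp [hx]
    _ = (n : ℝ) * ∑ y ∈ Finset.univ.filter b, g y := by
        rw [Finset.sum_filter, Finset.mul_sum]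
        exact Finset.sum_congr rfl fun y _ => by split <;> simp


private lemma sum_biUnion_le' {ι G : Type*} [DecidableEq G] (s : Finset ι) (t : ι → Finset G)
    (f : G → ℝ) (hf : ∀ x, 0 ≤ f x) :
    ∑ x ∈ s.biUnion t, f x ≤ ∑ j ∈ s, ∑ x ∈ t j, f x := by
  classical
  induction s using Finset.induction_on with
  | empty => simp
  | insert a s ha ih =>
    rw [Finset.biUnion_insert, Finset.sum_insert ha]
    have h1 : ∑ x ∈ t a ∪ s.biUnion t, f x + ∑ x ∈ t a ∩ s.biUnion t, f x
        = ∑ x ∈ t a, f x + ∑ x ∈ s.biUnion t, f x := Finset.sum_union_inter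
    have h2 : 0 ≤ ∑ x ∈ t a ∩ s.biUnion t, f x := Finset.sum_nonneg fun x _ => hf x
    linarith

private lemma bound_ineq {α d c nn : ℝ} (hα1 : α ≤ 1) (hd0 : 0 < d) (hd2 : d < 1/2)
    (hdα : d ≤ α) (hc : 0 ≤ c) (hn : 0 ≤ nn) :
    (α * nn) * (c * (α - d) / (α * (1 - d))) ≤ α * c * nn ∧
    (α * nn) * (c * (α - d) / (α * (1 - d))) ≤ α^2 * c * nn / (4*d*(1-d)) := by
  have hα0 : 0 < α := lt_of_lt_of_le hd0 hdα
  have h1 : (0:ℝ) < 1 - d := by linarith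
  have hLHS : (α * nn) * (c * (α - d) / (α * (1 - d))) = nn * c * ((α - d) / (1 - d)) := by
    field_simp
  constructor
  · rw [hLHS]
    have h2 : (α - d) / (1 - d) ≤ α := by
      rw [div_le_iff₀ h1]
      nlinarith
    calc nn * c * ((α - d)/(1-d)) ≤ nn * c * α :=
          mul_le_mul_of_nonneg_left h2 (by positivity)
      _ = α * c * nn := by ring
  · rw [hLHS]
    have h3 : (α - d)/(1-d) ≤ α^2 / (4*d*(1-d)) := by
      rw [div_le_div_iff₀ h1 (by positivity)]
      nlinarith [sq_nonneg (α - 2*d)]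
    calc nn * c * ((α-d)/(1-d)) ≤ nn * c * (α^2/(4*d*(1-d))) :=
          mul_le_mul_of_nonneg_left h3 (by positivity)
      _ = α^2 * c * nn / (4*d*(1-d)) := by ring

set_option maxHeartbeats 2000000 in
/-- **The distortion method for Dedekind domains.**
If `∑_{j=1}^J min{M_j^{(1)}, M_j^{(2)}/(4δ_j(1-δ_j))} < 1`, then
`∑_{ā ∈ B_1 ∪ ⋯ ∪ B_J} P_J(ā) < 1` and the collection `A` does not cover `R`. -/
theorem stmt5
    -- R is a Dedekind domain (not a field) with all nontrivial quotients finite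
    (R : Type*) [CommRing R] [IsDedekindDomain R] (hnotfield : ¬ IsField R)
    (hfin : ∀ I : Ideal R, I ≠ ⊥ → Finite (R ⧸ I))
    -- the collection A = {a i + I i}
    (m : ℕ) (a : Fin m → R) (I : Fin m → Ideal R)
    (hIbot : ∀ i, I i ≠ ⊥) (hItop : ∀ i, I i ≠ ⊤)
    -- Q = I_1 ∩ ⋯ ∩ I_m with prime factorization P_1^{ν_1} ⋯ P_J^{ν_J},
    -- |P_1| ≤ ⋯ ≤ |P_J|
    (Q : Ideal R) (hQ : Q = ⨅ i, I i)
    (J : ℕ) (P : ℕ → Ideal R) (ν : ℕ → ℕ)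
    (hPprime : ∀ j ∈ Finset.Icc 1 J, (P j).IsPrime ∧ P j ≠ ⊥)
    (hν : ∀ j ∈ Finset.Icc 1 J, 1 ≤ ν j)
    (hPinj : ∀ j ∈ Finset.Icc 1 J, ∀ k ∈ Finset.Icc 1 J, P j = P k → j = k)
    (hPord : ∀ j ∈ Finset.Icc 1 J, ∀ k ∈ Finset.Icc 1 J, j ≤ k →
      Nat.card (R ⧸ P j) ≤ Nat.card (R ⧸ P k))
    (hfact : Q = ∏ j ∈ Finset.Icc 1 J, P j ^ ν j)
    -- the partial products Q_j (so Q_0 = R)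
    (Qp : ℕ → Ideal R) (hQp : ∀ j ≤ J, Qp j = ∏ i ∈ Finset.Icc 1 j, P i ^ ν i)
    -- the sets B_j ⊆ R/Q
    (B : ℕ → Set (R ⧸ Q))
    (hB : ∀ j ∈ Finset.Icc 1 J, B j =
      ⋃ i ∈ {i : Fin m | I i ∣ Qp j ∧ ¬ I i ∣ Qp (j - 1)},
        Ideal.Quotient.mk Q '' {r : R | r - a i ∈ I i})
    -- the fibres F_j(ā) of the projections π_j : R/Q → R/Q_j
    (Fib : ℕ → (R ⧸ Q) → Set (R ⧸ Q))
    (hFib : ∀ j ≤ J, ∀ x, Fib j x =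
      {y : R ⧸ Q | y - x ∈ Ideal.map (Ideal.Quotient.mk Q) (Qp j)})
    -- α_j(ā) = #(F_{j-1}(ā) ∩ B_j) / #F_{j-1}(ā)
    (α : ℕ → (R ⧸ Q) → ℝ)
    (hα : ∀ j ∈ Finset.Icc 1 J, ∀ x, α j x =
      (Nat.card ↥(Fib (j - 1) x ∩ B j) : ℝ) / (Nat.card ↥(Fib (j - 1) x) : ℝ))
    -- the distortion parameters δ_j ∈ (0, 1/2)
    (δ : ℕ → ℝ) (hδ : ∀ j ∈ Finset.Icc 1 J, 0 < δ j ∧ δ j < 1 / 2)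
    -- the distorted measures P_0, …, P_J
    (μ : ℕ → (R ⧸ Q) → ℝ)
    (hμ0 : ∀ x, μ 0 x = 1 / (Nat.card (R ⧸ Q) : ℝ))
    (hμ : ∀ j ∈ Finset.Icc 1 J, ∀ x, μ j x =
      if α j x < δ j then
        μ (j - 1) x * (if x ∈ B j then 0 else 1) / (1 - α j x)
      else
        μ (j - 1) x * (α j x - if x ∈ B j then δ j else 0) / (α j x * (1 - δ j)))
    -- the moments M_j^{(k)}
    (M : ℕ → ℕ → ℝ)
    (hM : ∀ k j, M k j = ∑ᶠ x : R ⧸ Q, α j x ^ k * μ (j - 1) x)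
    -- the hypothesis ∑_{j=1}^J min{M_j^{(1)}, M_j^{(2)}/(4δ_j(1-δ_j))} < 1
    (hsum : ∑ j ∈ Finset.Icc 1 J,
      min (M 1 j) (M 2 j / (4 * δ j * (1 - δ j))) < 1) :
    (∑ᶠ x ∈ ⋃ j ∈ Finset.Icc 1 J, B j, μ J x) < 1 ∧
      (⋃ i, {r : R | r - a i ∈ I i}) ≠ Set.univ := by

  classical
  -- Q is nonzero, so R/Q is finite
  have hQbot : Q ≠ ⊥ := by
    rw [hfact]
    refine Finset.prod_ne_zero_iff.mpr fun j hj => ?_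
    exact pow_ne_zero _ (hPprime j hj).2
  haveI : Finite (R ⧸ Q) := hfin Q hQbot
  haveI : Fintype (R ⧸ Q) := Fintype.ofFinite _
  set N : ℕ → Ideal (R ⧸ Q) := fun j => (Qp j).map (Ideal.Quotient.mk Q) with hNdef
  have hQp0 : Qp 0 = ⊤ := by
    rw [hQp 0 (Nat.zero_le J)]; simp
  have hQpJ : Qp J = Q := by rw [hQp J le_rfl, hfact]
  have hN0 : N 0 = ⊤ := by
    simp [hNdef, hQp0, Ideal.map_top]
  have hNJ : N J = ⊥ := by
    simp [hNdef, hQpJ, Ideal.map_quotient_self]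
  have hQpmono : ∀ j k, j ≤ k → k ≤ J → Qp k ≤ Qp j := by
    intro j k hjk hkJ
    rw [hQp k hkJ, hQp j (le_trans hjk hkJ)]
    have hsub : Finset.Icc 1 j ⊆ Finset.Icc 1 k :=
      Finset.Icc_subset_Icc le_rfl hjk
    have hps := Finset.prod_sdiff (f := fun i => P i ^ ν i) hsub
    calc ∏ i ∈ Finset.Icc 1 k, P i ^ ν i
        = (∏ i ∈ Finset.Icc 1 k \ Finset.Icc 1 j, P i ^ ν i) *
            ∏ i ∈ Finset.Icc 1 j, P i ^ ν i := hps.symm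
      _ ≤ ∏ i ∈ Finset.Icc 1 j, P i ^ ν i := Ideal.mul_le_right
  have hNmono : ∀ j k, j ≤ k → k ≤ J → N k ≤ N j := fun j k hjk hkJ =>
    Ideal.map_mono (hQpmono j k hjk hkJ)
  set Ffin : ℕ → (R ⧸ Q) → Finset (R ⧸ Q) :=
    fun j x => Finset.univ.filter (fun y => y - x ∈ N j) with hFf
  set Bfin : ℕ → Finset (R ⧸ Q) := fun j => Finset.univ.filter (fun y => y ∈ B j) with hBf
  have hFibFin : ∀ j ≤ J, ∀ x, Fib j x = ↑(Ffin j x) := by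
    intro j hj x
    rw [hFib j hj x]; ext y; simp [hFf]; exact Iff.rfl
  set n : ℕ → ℕ := fun j => (Finset.univ.filter (fun y : R ⧸ Q => y ∈ N j)).card with hndef
  have hFcard : ∀ j x, (Ffin j x).card = n j := by
    intro j x
    refine Finset.card_bij' (fun y _ => y - x) (fun z _ => z + x) ?_ ?_ ?_ ?_
    · intro y hy; simp only [hFf, Finset.mem_filter, Finset.mem_univ, true_and] at hy ⊢; exact hy
    · intro z hz; simp only [hndef, hFf, Finset.mem_filter, Finset.mem_univ, true_and] at hz ⊢
      simpa using hz
    · intro y _; ring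
    · intro z _; ring
  have hnpos : ∀ j, 0 < n j := by
    intro j
    rw [← hFcard j 0]
    exact Finset.card_pos.mpr ⟨0, by simp [hFf]⟩
  have hmemF : ∀ j x, x ∈ Ffin j x := fun j x => by simp [hFf]
  have hcardFib : ∀ j ≤ J, ∀ x, Nat.card ↥(Fib j x) = n j := by
    intro j hj x
    rw [hFibFin j hj x, Nat.card_coe_set_eq, Set.ncard_coe_finset, hFcard]
  -- B is a union of N j fibres
  have hBinv : ∀ j ∈ Finset.Icc 1 J, ∀ x y, y - x ∈ N j → x ∈ B j → y ∈ B j := by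
    intro j hj x y hxy hxB
    rw [hB j hj] at hxB ⊢
    simp only [Set.mem_iUnion, Set.mem_setOf_eq, Set.mem_image] at hxB ⊢
    obtain ⟨i, ⟨hdvd, hndvd⟩, r, hr, hrx⟩ := hxB
    obtain ⟨q, hq, hq2⟩ :=
      (Ideal.mem_map_iff_of_surjective _ Ideal.Quotient.mk_surjective).mp hxy
    refine ⟨i, ⟨hdvd, hndvd⟩, r + q, ?_, ?_⟩
    · have hle : Qp j ≤ I i := Ideal.le_of_dvd hdvd
      have : r + q - a i = (r - a i) + q := by ring
      rw [this]
      exact add_mem hr (hle hq)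
    · rw [map_add, hrx, hq2]; ring
  -- value of α
  have hαval : ∀ j ∈ Finset.Icc 1 J, ∀ x,
      α j x = ((Ffin (j-1) x ∩ Bfin j).card : ℝ) / ((n (j-1) : ℝ)) := by
    intro j hj x
    have hj1J : j - 1 ≤ J := le_trans (Nat.sub_le j 1) (Finset.mem_Icc.mp hj).2
    have hset : Fib (j-1) x ∩ B j = ↑(Ffin (j-1) x ∩ Bfin j) := by
      rw [hFibFin (j-1) hj1J x]
      ext z; simp [hBf]
    rw [hα j hj x, hcardFib (j-1) hj1J x, hset, Nat.card_coe_set_eq,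
      Set.ncard_coe_finset]
  have hsym : ∀ j (x y : R ⧸ Q), y - x ∈ N j → x - y ∈ N j := by
    intro j x y h
    rw [← neg_sub]; exact neg_mem h
  have hαinv : ∀ j ∈ Finset.Icc 1 J, ∀ x y, y - x ∈ N (j-1) → α j y = α j x := by
    intro j hj x y hxy
    have hFeq : Ffin (j-1) y = Ffin (j-1) x := by
      ext z
      simp only [hFf, Finset.mem_filter, Finset.mem_univ, true_and]
      constructor
      · intro h
        have := add_mem h hxy
        simpa [sub_add_sub_cancel] using this
      · intro h
        have := sub_mem h hxy
        simpa [sub_sub_sub_cancel_right] using this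
    rw [hαval j hj x, hαval j hj y, hFeq]
  have hα01 : ∀ j ∈ Finset.Icc 1 J, ∀ x, 0 ≤ α j x ∧ α j x ≤ 1 := by
    intro j hj x
    rw [hαval j hj x]
    have hpos : (0:ℝ) < (n (j-1) : ℝ) := by exact_mod_cast hnpos (j-1)
    constructor
    · exact div_nonneg (Nat.cast_nonneg _) (Nat.cast_nonneg _)
    · rw [div_le_one hpos]
      have : (Ffin (j-1) x ∩ Bfin j).card ≤ n (j-1) := by
        rw [← hFcard (j-1) x]
        exact Finset.card_le_card Finset.inter_subset_left
      exact_mod_cast this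
  have hμinv : ∀ j, j ≤ J → ∀ x y, y - x ∈ N j → μ j y = μ j x := by
    intro j
    induction j with
    | zero => intro _ x y _; rw [hμ0, hμ0]
    | succ j ih =>
      intro hj x y hxy
      have hj1 : j + 1 ∈ Finset.Icc 1 J :=
        Finset.mem_Icc.mpr ⟨Nat.succ_le_succ (Nat.zero_le j), hj⟩
      have hjJ : j ≤ J := Nat.le_of_succ_le hj
      have hxy' : y - x ∈ N j := hNmono j (j+1) (Nat.le_succ j) hj hxy
      have hμ' : μ j y = μ j x := ih hjJ x y hxy'
      have hα' : α (j+1) y = α (j+1) x := hαinv (j+1) hj1 x y (by simpa using hxy')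
      have hB' : x ∈ B (j+1) ↔ y ∈ B (j+1) :=
        ⟨hBinv _ hj1 x y hxy, hBinv _ hj1 y x (hsym _ x y hxy)⟩
      rw [hμ _ hj1 x, hμ _ hj1 y]
      simp only [Nat.add_sub_cancel]
      rw [hμ', hα']
      by_cases hxB : x ∈ B (j+1)
      · simp [hxB, hB'.mp hxB]
      · have hyB : y ∉ B (j+1) := fun h => hxB (hB'.mpr h)
        simp [hxB, hyB]
  have hμnn : ∀ j, j ≤ J → ∀ x, 0 ≤ μ j x := by
    intro j
    induction j with
    | zero => intro _ x; rw [hμ0]; positivity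
    | succ j ih =>
      intro hj x
      have hj1 : j + 1 ∈ Finset.Icc 1 J :=
        Finset.mem_Icc.mpr ⟨Nat.succ_le_succ (Nat.zero_le j), hj⟩
      have hjJ : j ≤ J := Nat.le_of_succ_le hj
      have hμprev : 0 ≤ μ j x := ih hjJ x
      obtain ⟨hδ0, hδ1⟩ := hδ (j+1) hj1
      obtain ⟨hα0, hα1⟩ := hα01 (j+1) hj1 x
      rw [hμ _ hj1 x]
      simp only [Nat.add_sub_cancel]
      by_cases hlt : α (j+1) x < δ (j+1)
      · rw [if_pos hlt]
        have h1 : (0:ℝ) < 1 - α (j+1) x := by linarith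
        by_cases hxB : x ∈ B (j+1)
        · simp [hxB]
        · rw [if_neg hxB]
          positivity
      · rw [if_neg hlt]
        push_neg at hlt
        have hαpos : 0 < α (j+1) x := lt_of_lt_of_le hδ0 hlt
        have h1 : (0:ℝ) < 1 - δ (j+1) := by linarith
        apply div_nonneg _ (le_of_lt (by positivity))
        apply mul_nonneg hμprev
        by_cases hxB : x ∈ B (j+1)
        · rw [if_pos hxB]; linarith
        · rw [if_neg hxB]; linarith
  have hEsum : ∀ j ∈ Finset.Icc 1 J, ∀ x,
      ∑ y ∈ Ffin (j-1) x, μ j y = ∑ y ∈ Ffin (j-1) x, μ (j-1) y := by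
    intro j hj x
    obtain ⟨hj1, hjJ⟩ := Finset.mem_Icc.mp hj
    have hj1J : j - 1 ≤ J := le_trans (Nat.sub_le j 1) hjJ
    obtain ⟨hδ0, hδhalf⟩ := hδ j hj
    obtain ⟨hα0, hα1⟩ := hα01 j hj x
    set F := Ffin (j-1) x with hFdef
    set c := μ (j-1) x with hcdef
    have hnn : (F.card : ℝ) = (n (j-1) : ℝ) := by exact_mod_cast congrArg Nat.cast (hFcard (j-1) x)
    have hnpos' : (0:ℝ) < (n (j-1) : ℝ) := by exact_mod_cast hnpos (j-1)
    have hky : ∀ y ∈ F, y - x ∈ N (j-1) := fun y hy => by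
      simpa [hFdef, hFf] using hy
    have hcy : ∀ y ∈ F, μ (j-1) y = c := fun y hy => hμinv (j-1) hj1J x y (hky y hy)
    have hαy : ∀ y ∈ F, α j y = α j x := fun y hy => hαinv j hj x y (hky y hy)
    have hμy : ∀ y ∈ F, μ j y =
        if α j x < δ j then c * (if y ∈ B j then 0 else 1) / (1 - α j x)
        else c * (α j x - if y ∈ B j then δ j else 0) / (α j x * (1 - δ j)) := by
      intro y hy
      rw [hμ j hj y, hαy y hy, hcy y hy]
    have hsplit : ∀ f : (R ⧸ Q) → ℝ, ∑ y ∈ F, f y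
        = ∑ y ∈ F ∩ Bfin j, f y + ∑ y ∈ F \ Bfin j, f y := fun f =>
      (Finset.sum_inter_add_sum_sdiff F (Bfin j) f).symm
    have hmemB : ∀ y : R ⧸ Q, y ∈ Bfin j ↔ y ∈ B j := fun y => by simp [hBf]
    set k := (F ∩ Bfin j).card with hkdef
    have hcards : k + (F \ Bfin j).card = F.card := Finset.card_inter_add_card_sdiff F (Bfin j)
    have hdiffcard : ((F \ Bfin j).card : ℝ) = (F.card : ℝ) - k := by
      have : ((k + (F \ Bfin j).card : ℕ) : ℝ) = (F.card : ℝ) := by exact_mod_cast congrArg Nat.cast hcards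
      push_cast at this
      linarith
    have hαval' : α j x = (k : ℝ) / (n (j-1) : ℝ) := hαval j hj x
    have hRHS : ∑ y ∈ F, μ (j-1) y = (F.card : ℝ) * c := by
      rw [Finset.sum_congr rfl hcy, Finset.sum_const, nsmul_eq_mul]
    rw [hRHS]
    by_cases hlt : α j x < δ j
    · have hsum1 : ∑ y ∈ F ∩ Bfin j, μ j y = 0 := by
        refine Finset.sum_eq_zero fun y hy => ?_
        have hyF : y ∈ F := Finset.mem_of_mem_inter_left hy
        have hyB : y ∈ B j := (hmemB y).mp (Finset.mem_of_mem_inter_right hy)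
        rw [hμy y hyF, if_pos hlt, if_pos hyB]
        ring
      have hval2 : ∀ y ∈ F \ Bfin j, μ j y = c * 1 / (1 - α j x) := by
        intro y hy
        have hyF : y ∈ F := (Finset.mem_sdiff.mp hy).1
        have hyB : y ∉ B j := fun h => (Finset.mem_sdiff.mp hy).2 ((hmemB y).mpr h)
        rw [hμy y hyF, if_pos hlt, if_neg hyB]
      have hsum2 : ∑ y ∈ F \ Bfin j, μ j y = ((F \ Bfin j).card : ℝ) * (c * 1 / (1 - α j x)) := by
        rw [Finset.sum_congr rfl hval2, Finset.sum_const, nsmul_eq_mul]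
      have hklt : (k : ℝ) < (F.card : ℝ) := by
        have h1 : (k : ℝ) / (n (j-1) : ℝ) < 1 := by rw [← hαval']; linarith
        have h2 : (k : ℝ) < (n (j-1) : ℝ) := (div_lt_one hnpos').mp h1
        rw [hnn]; exact h2
      have hfne : (F.card : ℝ) ≠ 0 := by
        rw [hnn]; exact ne_of_gt hnpos'
      have hne : (F.card : ℝ) - k ≠ 0 := by linarith
      have h1 : 1 - α j x = ((F.card : ℝ) - k) / (F.card : ℝ) := by
        rw [hαval', ← hnn]
        field_simp
      rw [hsplit (μ j), hsum1, hsum2, hdiffcard, zero_add, h1]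
      field_simp
    · have hlt' : δ j ≤ α j x := not_lt.mp hlt
      have hαpos : 0 < α j x := lt_of_lt_of_le hδ0 hlt'
      have hval1 : ∀ y ∈ F ∩ Bfin j, μ j y = c * (α j x - δ j) / (α j x * (1 - δ j)) := by
        intro y hy
        have hyF : y ∈ F := Finset.mem_of_mem_inter_left hy
        have hyB : y ∈ B j := (hmemB y).mp (Finset.mem_of_mem_inter_right hy)
        rw [hμy y hyF, if_neg hlt, if_pos hyB]
      have hval2 : ∀ y ∈ F \ Bfin j, μ j y = c * (α j x - 0) / (α j x * (1 - δ j)) := by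
        intro y hy
        have hyF : y ∈ F := (Finset.mem_sdiff.mp hy).1
        have hyB : y ∉ B j := fun h => (Finset.mem_sdiff.mp hy).2 ((hmemB y).mpr h)
        rw [hμy y hyF, if_neg hlt, if_neg hyB]
      have hsum1 : ∑ y ∈ F ∩ Bfin j, μ j y
          = (k : ℝ) * (c * (α j x - δ j) / (α j x * (1 - δ j))) := by
        rw [Finset.sum_congr rfl hval1, Finset.sum_const, nsmul_eq_mul]
      have hsum2 : ∑ y ∈ F \ Bfin j, μ j y
          = ((F \ Bfin j).card : ℝ) * (c * (α j x - 0) / (α j x * (1 - δ j))) := by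
        rw [Finset.sum_congr rfl hval2, Finset.sum_const, nsmul_eq_mul]
      rw [hsplit (μ j), hsum1, hsum2, hdiffcard]
      have hfne : (F.card : ℝ) ≠ 0 := by
        rw [hnn]; exact ne_of_gt hnpos'
      have hk : (k : ℝ) = α j x * (F.card : ℝ) := by
        rw [hαval', ← hnn]
        field_simp
      have h1 : (1:ℝ) - δ j ≠ 0 := by linarith
      have h2 : α j x ≠ 0 := ne_of_gt hαpos
      rw [hk]
      field_simp
      ring
  have hnrev : ∀ j (y : R ⧸ Q), (Finset.univ.filter (fun x => y - x ∈ N j)).card = n j := by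
    intro j y
    have heq : Finset.univ.filter (fun x : R ⧸ Q => y - x ∈ N j) = Ffin j y := by
      ext z
      simp only [hFf, Finset.mem_filter, Finset.mem_univ, true_and]
      exact ⟨fun h => hsym j z y h, fun h => hsym j y z h⟩
    rw [heq, hFcard]
  have htot : ∀ j, j ≤ J → ∑ x : R ⧸ Q, μ j x = 1 := by
    intro j
    induction j with
    | zero =>
      intro _
      have hcard : (0:ℝ) < (Nat.card (R ⧸ Q) : ℝ) := by
        have : 0 < Nat.card (R ⧸ Q) := Nat.card_pos
        exact_mod_cast this
      simp only [hμ0]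
      rw [Finset.sum_const, nsmul_eq_mul, Finset.card_univ, ← Nat.card_eq_fintype_card]
      field_simp
    | succ j ih =>
      intro hj
      have hjJ : j ≤ J := Nat.le_of_succ_le hj
      have hj1 : j + 1 ∈ Finset.Icc 1 J :=
        Finset.mem_Icc.mpr ⟨Nat.succ_le_succ (Nat.zero_le j), hj⟩
      have dc1 := double_count (fun x y : R ⧸ Q => y - x ∈ N j) (fun x y h => hsym j x y h)
        (n j) (hnrev j) (μ (j+1)) (fun _ => True) (fun _ _ _ _ => trivial)
      have dc2 := double_count (fun x y : R ⧸ Q => y - x ∈ N j) (fun x y h => hsym j x y h)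
        (n j) (hnrev j) (μ j) (fun _ => True) (fun _ _ _ _ => trivial)
      rw [Finset.filter_true] at dc1 dc2
      have hinner : ∀ x : R ⧸ Q, ∑ y ∈ Finset.univ.filter (fun y => y - x ∈ N j), μ (j+1) y
          = ∑ y ∈ Finset.univ.filter (fun y => y - x ∈ N j), μ j y := by
        intro x
        simpa [hFf] using hEsum (j+1) hj1 x
      have e1 : (n j : ℝ) * ∑ x : R ⧸ Q, μ (j+1) x = (n j : ℝ) * ∑ x : R ⧸ Q, μ j x := by
        rw [← dc1, ← dc2]
        exact Finset.sum_congr rfl fun x _ => hinner x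
      have hne : ((n j : ℝ)) ≠ 0 := by exact_mod_cast (hnpos j).ne'
      rw [mul_left_cancel₀ hne e1, ih hjJ]
  have hBpres : ∀ j ∈ Finset.Icc 1 J, ∀ k, j ≤ k → k ≤ J →
      ∑ x ∈ Bfin j, μ k x = ∑ x ∈ Bfin j, μ j x := by
    intro j hj k hjk
    induction k, hjk using Nat.le_induction with
    | base => intro _; rfl
    | succ k hk ih =>
      intro hkJ
      have hkJ' : k ≤ J := Nat.le_of_succ_le hkJ
      rw [← ih hkJ']
      have hk1 : k + 1 ∈ Finset.Icc 1 J :=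
        Finset.mem_Icc.mpr ⟨Nat.succ_le_succ (Nat.zero_le k), hkJ⟩
      have hbinv : ∀ x y : R ⧸ Q, y - x ∈ N k → x ∈ B j → y ∈ B j := fun x y hxy hx =>
        hBinv j hj x y (hNmono j k hk hkJ' hxy) hx
      have dc1 := double_count (fun x y : R ⧸ Q => y - x ∈ N k) (fun x y h => hsym k x y h)
        (n k) (hnrev k) (μ (k+1)) (fun x => x ∈ B j) hbinv
      have dc2 := double_count (fun x y : R ⧸ Q => y - x ∈ N k) (fun x y h => hsym k x y h)
        (n k) (hnrev k) (μ k) (fun x => x ∈ B j) hbinv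
      have hinner : ∀ x : R ⧸ Q, ∑ y ∈ Finset.univ.filter (fun y => y - x ∈ N k), μ (k+1) y
          = ∑ y ∈ Finset.univ.filter (fun y => y - x ∈ N k), μ k y := fun x => by
        simpa [hFf] using hEsum (k+1) hk1 x
      have e1 : (n k : ℝ) * ∑ x ∈ Finset.univ.filter (fun x : R ⧸ Q => x ∈ B j), μ (k+1) x
          = (n k : ℝ) * ∑ x ∈ Finset.univ.filter (fun x : R ⧸ Q => x ∈ B j), μ k x := by
        rw [← dc1, ← dc2]
        exact Finset.sum_congr rfl fun x _ => hinner x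
      have hne : ((n k : ℝ)) ≠ 0 := by exact_mod_cast (hnpos k).ne'
      exact mul_left_cancel₀ hne e1
  have hBbd : ∀ j ∈ Finset.Icc 1 J,
      ∑ x ∈ Bfin j, μ j x ≤ min (M 1 j) (M 2 j / (4 * δ j * (1 - δ j))) := by
    intro j hj
    obtain ⟨hj1, hjJ⟩ := Finset.mem_Icc.mp hj
    have hj1J : j - 1 ≤ J := le_trans (Nat.sub_le j 1) hjJ
    obtain ⟨hδ0, hδhalf⟩ := hδ j hj
    have hδd : (0:ℝ) < 4 * δ j * (1 - δ j) := by nlinarith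
    have hnpos' : (0:ℝ) < (n (j-1) : ℝ) := by exact_mod_cast hnpos (j-1)
    have dc := double_count (fun x y : R ⧸ Q => y - x ∈ N (j-1))
      (fun x y h => hsym _ x y h) (n (j-1)) (hnrev (j-1))
      (fun y => if y ∈ B j then μ j y else 0) (fun _ => True) (fun _ _ _ _ => trivial)
    rw [Finset.filter_true] at dc
    have hgsum : ∑ x ∈ Bfin j, μ j x
        = ∑ y : R ⧸ Q, (if y ∈ B j then μ j y else 0) := by
      rw [hBf]
      exact Finset.sum_filter _ _
    have hinner_eq : ∀ x : R ⧸ Q,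
        ∑ y ∈ Finset.univ.filter (fun y => y - x ∈ N (j-1)), (if y ∈ B j then μ j y else 0)
          = ∑ y ∈ Ffin (j-1) x ∩ Bfin j, μ j y := by
      intro x
      have hset : Ffin (j-1) x ∩ Bfin j
          = (Finset.univ.filter (fun y : R ⧸ Q => y - x ∈ N (j-1))).filter
              (fun y => y ∈ B j) := by
        ext y
        simp [hFf, hBf, Finset.mem_filter, and_assoc]
      rw [hset]
      simp only [Finset.sum_filter]
    have key : (n (j-1) : ℝ) * ∑ x ∈ Bfin j, μ j x
        = ∑ x : R ⧸ Q, ∑ y ∈ Ffin (j-1) x ∩ Bfin j, μ j y := by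
      rw [hgsum, ← dc]
      exact Finset.sum_congr rfl fun x _ => hinner_eq x
    have hinner_bd : ∀ x : R ⧸ Q,
        (∑ y ∈ Ffin (j-1) x ∩ Bfin j, μ j y ≤ α j x * μ (j-1) x * (n (j-1) : ℝ)) ∧
        (∑ y ∈ Ffin (j-1) x ∩ Bfin j, μ j y
          ≤ (α j x)^2 * μ (j-1) x * (n (j-1) : ℝ) / (4 * δ j * (1 - δ j))) := by
      intro x
      obtain ⟨hα0, hα1⟩ := hα01 j hj x
      have hc0 : 0 ≤ μ (j-1) x := hμnn (j-1) hj1J x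
      have hn0 : (0:ℝ) ≤ (n (j-1) : ℝ) := Nat.cast_nonneg _
      by_cases hlt : α j x < δ j
      · have hz : ∑ y ∈ Ffin (j-1) x ∩ Bfin j, μ j y = 0 := by
          refine Finset.sum_eq_zero fun y hy => ?_
          have hyF : y ∈ Ffin (j-1) x := Finset.mem_of_mem_inter_left hy
          have hyB : y ∈ B j := by
            have := Finset.mem_of_mem_inter_right hy
            simpa [hBf] using this
          have hky : y - x ∈ N (j-1) := by simpa [hFf] using hyF
          rw [hμ j hj y, hαinv j hj x y hky, if_pos hlt, if_pos hyB]
          ring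
        rw [hz]
        constructor
        · exact mul_nonneg (mul_nonneg hα0 hc0) hn0
        · exact div_nonneg (mul_nonneg (mul_nonneg (pow_nonneg hα0 2) hc0) hn0)
            (le_of_lt hδd)
      · have hlt' : δ j ≤ α j x := not_lt.mp hlt
        have hαpos : 0 < α j x := lt_of_lt_of_le hδ0 hlt'
        have hval : ∀ y ∈ Ffin (j-1) x ∩ Bfin j,
            μ j y = μ (j-1) x * (α j x - δ j) / (α j x * (1 - δ j)) := by
          intro y hy
          have hyF : y ∈ Ffin (j-1) x := Finset.mem_of_mem_inter_left hy
          have hyB : y ∈ B j := by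
            have := Finset.mem_of_mem_inter_right hy
            simpa [hBf] using this
          have hky : y - x ∈ N (j-1) := by simpa [hFf] using hyF
          rw [hμ j hj y, hαinv j hj x y hky, hμinv (j-1) hj1J x y hky,
            if_neg hlt, if_pos hyB]
        have hsumv : ∑ y ∈ Ffin (j-1) x ∩ Bfin j, μ j y
            = ((Ffin (j-1) x ∩ Bfin j).card : ℝ)
                * (μ (j-1) x * (α j x - δ j) / (α j x * (1 - δ j))) := by
          rw [Finset.sum_congr rfl hval, Finset.sum_const, nsmul_eq_mul]
        have hk : ((Ffin (j-1) x ∩ Bfin j).card : ℝ) = α j x * (n (j-1) : ℝ) := by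
          rw [hαval j hj x]
          field_simp
        rw [hsumv, hk]
        exact bound_ineq hα1 hδ0 hδhalf hlt' hc0 hn0
    have b1 : (n (j-1) : ℝ) * ∑ x ∈ Bfin j, μ j x ≤ (n (j-1) : ℝ) * M 1 j := by
      calc (n (j-1) : ℝ) * ∑ x ∈ Bfin j, μ j x
          = ∑ x : R ⧸ Q, ∑ y ∈ Ffin (j-1) x ∩ Bfin j, μ j y := key
        _ ≤ ∑ x : R ⧸ Q, α j x * μ (j-1) x * (n (j-1) : ℝ) :=
            Finset.sum_le_sum fun x _ => (hinner_bd x).1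
        _ = (n (j-1) : ℝ) * ∑ x : R ⧸ Q, α j x * μ (j-1) x := by
            rw [Finset.mul_sum]
            exact Finset.sum_congr rfl fun x _ => by ring
        _ = (n (j-1) : ℝ) * M 1 j := by
            rw [hM 1 j, finsum_eq_sum_of_fintype]
            congr 1
            exact (Finset.sum_congr rfl fun x _ => by rw [pow_one]).symm
    have b2 : (n (j-1) : ℝ) * ∑ x ∈ Bfin j, μ j x
        ≤ (n (j-1) : ℝ) * (M 2 j / (4 * δ j * (1 - δ j))) := by
      calc (n (j-1) : ℝ) * ∑ x ∈ Bfin j, μ j x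
          = ∑ x : R ⧸ Q, ∑ y ∈ Ffin (j-1) x ∩ Bfin j, μ j y := key
        _ ≤ ∑ x : R ⧸ Q, (α j x)^2 * μ (j-1) x * (n (j-1) : ℝ) / (4 * δ j * (1 - δ j)) :=
            Finset.sum_le_sum fun x _ => (hinner_bd x).2
        _ = (n (j-1) : ℝ) * ((∑ x : R ⧸ Q, (α j x)^2 * μ (j-1) x) / (4 * δ j * (1 - δ j))) := by
            rw [Finset.sum_div, Finset.mul_sum]
            exact Finset.sum_congr rfl fun x _ => by ring
        _ = (n (j-1) : ℝ) * (M 2 j / (4 * δ j * (1 - δ j))) := by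
            rw [hM 2 j, finsum_eq_sum_of_fintype]
    exact le_min ((mul_le_mul_iff_right₀ hnpos').mp b1) ((mul_le_mul_iff_right₀ hnpos').mp b2)
  -- assembling part 1
  set Ufin : Finset (R ⧸ Q) := (Finset.Icc 1 J).biUnion Bfin with hUdef
  have hUset : (⋃ j ∈ Finset.Icc 1 J, B j) = ↑Ufin := by
    ext x; simp [hUdef, hBf]
  have hfinsum : (∑ᶠ x ∈ ⋃ j ∈ Finset.Icc 1 J, B j, μ J x) = ∑ x ∈ Ufin, μ J x := by
    rw [hUset]; exact finsum_mem_coe_finset _ _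
  have hpart1 : (∑ᶠ x ∈ ⋃ j ∈ Finset.Icc 1 J, B j, μ J x) < 1 := by
    rw [hfinsum]
    calc ∑ x ∈ Ufin, μ J x ≤ ∑ j ∈ Finset.Icc 1 J, ∑ x ∈ Bfin j, μ J x :=
          sum_biUnion_le' (Finset.Icc 1 J) Bfin (μ J) (hμnn J le_rfl)
      _ = ∑ j ∈ Finset.Icc 1 J, ∑ x ∈ Bfin j, μ j x := by
          exact Finset.sum_congr rfl fun j hj => hBpres j hj J (Finset.mem_Icc.mp hj).2 le_rfl
      _ ≤ ∑ j ∈ Finset.Icc 1 J, min (M 1 j) (M 2 j / (4 * δ j * (1 - δ j))) :=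
          Finset.sum_le_sum fun j hj => hBbd j hj
      _ < 1 := hsum
  refine ⟨hpart1, ?_⟩
  intro hcov
  -- if A covers R then the B j cover R/Q
  have hUuniv : Ufin = Finset.univ := by
    rw [Finset.eq_univ_iff_forall]
    intro x
    obtain ⟨r, rfl⟩ := Ideal.Quotient.mk_surjective x
    have hr : r ∈ ⋃ i, {r : R | r - a i ∈ I i} := by rw [hcov]; trivial
    obtain ⟨i, hri⟩ := Set.mem_iUnion.mp hr
    have hdvdJ : I i ∣ Qp J := by
      rw [Ideal.dvd_iff_le, hQpJ, hQ]
      exact iInf_le I i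
    have hndvd0 : ¬ I i ∣ Qp 0 := by
      rw [Ideal.dvd_iff_le, hQp0]
      intro h
      exact hItop i (top_le_iff.mp h)
    have hex : ∃ j, j ≤ J ∧ I i ∣ Qp j := ⟨J, le_rfl, hdvdJ⟩
    obtain ⟨hj0J, hj0dvd⟩ := Nat.find_spec hex
    have hj0pos : 1 ≤ Nat.find hex := by
      rcases Nat.eq_zero_or_pos (Nat.find hex) with h | h
      · rw [h] at hj0dvd
        exact absurd hj0dvd hndvd0
      · exact h
    have hmin : ¬ (Nat.find hex - 1 ≤ J ∧ I i ∣ Qp (Nat.find hex - 1)) :=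
      Nat.find_min hex (by omega)
    have hndvd : ¬ I i ∣ Qp (Nat.find hex - 1) := fun h => hmin ⟨by omega, h⟩
    have hxB : (Ideal.Quotient.mk Q r) ∈ B (Nat.find hex) := by
      rw [hB (Nat.find hex) (Finset.mem_Icc.mpr ⟨hj0pos, hj0J⟩)]
      simp only [Set.mem_iUnion, Set.mem_setOf_eq, Set.mem_image]
      exact ⟨i, ⟨hj0dvd, hndvd⟩, r, hri, rfl⟩
    rw [hUdef]
    exact Finset.mem_biUnion.mpr ⟨Nat.find hex, Finset.mem_Icc.mpr ⟨hj0pos, hj0J⟩,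
      by simp [hBf, hxB]⟩
  have : (∑ᶠ x ∈ ⋃ j ∈ Finset.Icc 1 J, B j, μ J x) = 1 := by
    rw [hfinsum, hUuniv]; exact htot J le_rfl
  rw [this] at hpart1
  exact lt_irrefl 1 hpart1
end

section
/- With the setup as in the context, take δ_j = 1/2 for all 1 ≤ j ≤ J. If ∑_{j=1}^J M_j^{(2)} < 1, then the collection A does not cover R, i.e. ⋃_{i=1}^m (a_i + I_i) ≠ R. -/
/-! Start from the uniform measure on `R/Q` and, at step `j`, reweight each fibre of
`R/Q → R/Q_{j-1}` so that its mass is unchanged: if `B_j` has density `α < 1/2` in the fibre,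
`B_j` is emptied, otherwise the weight on `B_j` is cut so that it carries mass `(2α - 1) w ≤ α² w`
of the fibre mass `w`. Since `B_j` is a union of fibres of `R/Q → R/Q_j`, the later steps do not
change its mass, so the final measure gives `B_j` mass at most `M_j^{(2)}` while its total mass
stays `1`. Hence `∑ M_j^{(2)} < 1` leaves a point of `R/Q` outside every `B_j`, whereas every
element of `⋃ (a_i + I_i)` lands in the `B_j` with `j` minimal such that `I_i ∣ Q_j`. -/

open scoped Classical

open Finset

section ClassDensity

variable {X : Type*}

lemma Setoid.rel_iff_rel_of_rel (s : Setoid X) {x y : X} (hxy : s x y) (z : X) :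
    s x z ↔ s y z :=
  ⟨s.trans (s.symm hxy), s.trans hxy⟩

noncomputable def classDensity (s : Setoid X) (B : Set X) (x : X) : ℝ :=
  (Nat.card ↥({y | s x y} ∩ B) : ℝ) / (Nat.card ↥{y | s x y} : ℝ)

variable [Fintype X] (s : Setoid X) (B : Set X)

lemma classDensity_eq (x : X) :
    classDensity s B x = (#{y | s x y ∧ y ∈ B} : ℝ) / #{y | s x y} := by
  simp only [classDensity, Nat.card_eq_card_toFinset]
  congr 3 <;> ext <;> simp

lemma card_filter_rel_pos (x : X) : 0 < #{y | s x y} :=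
  card_pos.2 ⟨x, mem_filter.2 ⟨mem_univ x, s.refl x⟩⟩

lemma le_ker_classDensity : s ≤ Setoid.ker (classDensity s B) := fun x y hxy => by
  simp only [Setoid.ker_def, classDensity_eq, s.rel_iff_rel_of_rel hxy]

lemma sum_mul_indicator_eq_sum_mul_classDensity {f : X → ℝ} (hf : s ≤ Setoid.ker f) :
    ∑ x, f x * B.indicator 1 x = ∑ x, f x * classDensity s B x := by
  have hclass : ∀ x, f x * classDensity s B x = ∑ y with s x y ∧ y ∈ B, f y / #{z | s y z} := by
    intro x
    rw [classDensity_eq, mul_div_left_comm, ← nsmul_eq_mul, ← sum_const]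
    refine sum_congr rfl fun y hy => ?_
    have hxy := (mem_filter.1 hy).2.1
    simp only [Setoid.ker_def.1 (hf hxy), s.rel_iff_rel_of_rel hxy]
  have hfibre : ∀ y, ∑ x with s x y, f y / #{z | s y z} = f y := by
    intro y
    have hcard : (#{z | s y z} : ℝ) ≠ 0 := by exact_mod_cast (card_filter_rel_pos s y).ne'
    rw [sum_const, nsmul_eq_mul, filter_congr fun x _ => s.comm' (y := y)]
    field_simp
  calc ∑ x, f x * B.indicator 1 x
      = ∑ y with y ∈ B, ∑ x with s x y, f y / #{z | s y z} := by
        simp [hfibre, sum_filter, Set.indicator_apply]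
    _ = ∑ x, ∑ y with s x y ∧ y ∈ B, f y / #{z | s y z} :=
        sum_comm' fun y x => by simp [and_comm]
    _ = ∑ x, f x * classDensity s B x := (sum_congr rfl fun x _ => hclass x).symm

end ClassDensity

/-- The weight of the paper's step with density `α`, where `t` stands for the indicator
`1_{x ∈ B}`; it is affine in `t`, and substituting `α` for `t` gives `1`. -/
noncomputable def distortionFactor (δ α t : ℝ) : ℝ :=
  if α < δ then (1 - t) / (1 - α) else (α - δ * t) / (α * (1 - δ))

lemma distortionFactor_eq_add_mul (δ α t : ℝ) : distortionFactor δ α t =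
    distortionFactor δ α 0 + t * (distortionFactor δ α 1 - distortionFactor δ α 0) := by
  unfold distortionFactor; split_ifs <;> ring

lemma distortionFactor_self {δ : ℝ} (hδ : δ ∈ Set.Ioo 0 1) (α : ℝ) :
    distortionFactor δ α α = 1 := by
  obtain ⟨hδ0, hδ1⟩ := hδ
  unfold distortionFactor
  split_ifs with h
  · exact div_self (by linarith)
  · have : α ≠ 0 := by linarith
    have : 1 - δ ≠ 0 := by linarith
    field_simp

lemma distortionFactor_nonneg {δ α t : ℝ} (hδ : δ ∈ Set.Icc 0 1) (ht : t ∈ Set.Icc 0 1) :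
    0 ≤ distortionFactor δ α t := by
  obtain ⟨hδ0, hδ1⟩ := hδ
  obtain ⟨ht0, ht1⟩ := ht
  unfold distortionFactor
  split_ifs with h
  · exact div_nonneg (by linarith) (by linarith)
  · exact div_nonneg (by nlinarith) (mul_nonneg (by linarith) (by linarith))

lemma mul_distortionFactor_half_one_le (α : ℝ) : α * distortionFactor (1 / 2) α 1 ≤ α ^ 2 := by
  unfold distortionFactor
  split_ifs with h
  · simp only [sub_self, zero_div, mul_zero]; positivity
  · have : α ≠ 0 := by linarith
    calc α * ((α - 1 / 2 * 1) / (α * (1 - 1 / 2))) = 2 * α - 1 := by field_simp; ring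
      _ ≤ α ^ 2 := by nlinarith [sq_nonneg (α - 1)]

section Distort

variable {X : Type*}

noncomputable def distort (s : Setoid X) (B : Set X) (δ : ℝ) (ν : X → ℝ) (x : X) : ℝ :=
  ν x * distortionFactor δ (classDensity s B x) (B.indicator 1 x)

lemma distort_apply (s : Setoid X) (B : Set X) (δ : ℝ) (ν : X → ℝ) (x : X) :
    distort s B δ ν x = if classDensity s B x < δ then
        ν x * (if x ∈ B then 0 else 1) / (1 - classDensity s B x)
      else ν x * (classDensity s B x - if x ∈ B then δ else 0) /
        (classDensity s B x * (1 - δ)) := by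
  unfold distort distortionFactor
  by_cases hx : x ∈ B <;> split_ifs <;> simp [hx] <;> ring

variable [Fintype X] (s : Setoid X) (B : Set X) {ν : X → ℝ}

lemma sum_mul_distort {δ : ℝ} (hδ : δ ∈ Set.Ioo 0 1) (hν : s ≤ Setoid.ker ν) {h : X → ℝ}
    (hh : s ≤ Setoid.ker h) : ∑ x, h x * distort s B δ ν x = ∑ x, h x * ν x := by
  set F := fun (x : X) (t : ℝ) => distortionFactor δ (classDensity s B x) t
  have hF : ∀ t, s ≤ Setoid.ker (F · t) := fun t x y hxy => by
    simp only [Setoid.ker_def, F, Setoid.ker_def.1 (le_ker_classDensity s B hxy)]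
  have hslope : s ≤ Setoid.ker fun x => h x * ν x * (F x 1 - F x 0) := fun x y hxy => by
    simp only [Setoid.ker_def, Setoid.ker_def.1 (hh hxy), Setoid.ker_def.1 (hν hxy),
      Setoid.ker_def.1 (hF 1 hxy), Setoid.ker_def.1 (hF 0 hxy)]
  calc ∑ x, h x * distort s B δ ν x
      = ∑ x, (h x * ν x * F x 0 + h x * ν x * (F x 1 - F x 0) * B.indicator 1 x) := by
        refine sum_congr rfl fun x _ => ?_
        rw [distort, distortionFactor_eq_add_mul]; ring
    _ = ∑ x, (h x * ν x * F x 0 + h x * ν x * (F x 1 - F x 0) * classDensity s B x) := by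
        rw [sum_add_distrib, sum_add_distrib,
          sum_mul_indicator_eq_sum_mul_classDensity s B hslope]
    _ = ∑ x, h x * ν x := by
        refine sum_congr rfl fun x _ => ?_
        have h1 := (distortionFactor_eq_add_mul δ _ _).symm.trans
          (distortionFactor_self hδ (classDensity s B x))
        linear_combination h x * ν x * h1

lemma sum_indicator_mul_distort_le (hν : s ≤ Setoid.ker ν) (hν0 : 0 ≤ ν) :
    ∑ x, B.indicator 1 x * distort s B (1 / 2) ν x ≤ ∑ x, classDensity s B x ^ 2 * ν x := by
  set F := fun (x : X) => ν x * distortionFactor (1 / 2) (classDensity s B x) 1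
  have hF : s ≤ Setoid.ker F := fun x y hxy => by
    simp only [Setoid.ker_def, F, Setoid.ker_def.1 (hν hxy),
      Setoid.ker_def.1 (le_ker_classDensity s B hxy)]
  calc ∑ x, B.indicator 1 x * distort s B (1 / 2) ν x = ∑ x, F x * B.indicator 1 x := by
        refine sum_congr rfl fun x _ => ?_
        by_cases hx : x ∈ B <;> simp [distort, F, hx]
    _ = ∑ x, ν x * (classDensity s B x * distortionFactor (1 / 2) (classDensity s B x) 1) := by
        rw [sum_mul_indicator_eq_sum_mul_classDensity s B hF]
        exact sum_congr rfl fun x _ => by ring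
    _ ≤ ∑ x, classDensity s B x ^ 2 * ν x := sum_le_sum fun x _ => by
        rw [mul_comm _ (ν x)]
        exact mul_le_mul_of_nonneg_left (mul_distortionFactor_half_one_le _) (hν0 x)

end Distort

section DistortedMeasure

variable {X : Type*}

lemma Setoid.le_ker_indicator {s : Setoid X} {B : Set X}
    (hB : ∀ ⦃x y⦄, s x y → x ∈ B → y ∈ B) : s ≤ Setoid.ker (B.indicator (1 : X → ℝ)) :=
  fun x y hxy => by
    by_cases hx : x ∈ B
    · simp [Setoid.ker_def, hx, hB hxy hx]
    · have hy : y ∉ B := fun hy => hx (hB (s.symm hxy) hy)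
      simp [Setoid.ker_def, hx, hy]

noncomputable def distortedMeasure (E : ℕ → Setoid X) (B : ℕ → Set X) (δ : ℕ → ℝ) :
    ℕ → X → ℝ
  | 0 => fun _ => 1 / Nat.card X
  | j + 1 => distort (E j) (B (j + 1)) (δ (j + 1)) (distortedMeasure E B δ j)

variable {E : ℕ → Setoid X} {B : ℕ → Set X} {δ : ℕ → ℝ} {J : ℕ}

lemma eq_distortedMeasure {μ α : ℕ → X → ℝ}
    (hα : ∀ j ∈ Icc 1 J, α j = classDensity (E (j - 1)) (B j))
    (hμ0 : ∀ x, μ 0 x = 1 / Nat.card X)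
    (hμ : ∀ j ∈ Icc 1 J, ∀ x, μ j x =
      if α j x < δ j then
        μ (j - 1) x * (if x ∈ B j then 0 else 1) / (1 - α j x)
      else
        μ (j - 1) x * (α j x - if x ∈ B j then δ j else 0) / (α j x * (1 - δ j))) :
    ∀ j ≤ J, μ j = distortedMeasure E B δ j
  | 0, _ => funext hμ0
  | j + 1, hj => funext fun x => by
    have hj' : j + 1 ∈ Icc 1 J := mem_Icc.2 ⟨j.succ_pos, hj⟩
    rw [hμ (j + 1) hj', distortedMeasure, distort_apply, hα (j + 1) hj', Nat.add_sub_cancel,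
      eq_distortedMeasure hα hμ0 hμ j (by omega)]

lemma distortedMeasure_nonneg (hδ : ∀ j ∈ Icc 1 J, δ j ∈ Set.Ioo 0 1) :
    ∀ j ≤ J, 0 ≤ distortedMeasure E B δ j
  | 0, _ => fun _ => by simp only [distortedMeasure]; positivity
  | j + 1, hj => fun x => by
    refine mul_nonneg (distortedMeasure_nonneg hδ j (by omega) x)
      (distortionFactor_nonneg (Set.Ioo_subset_Icc_self (hδ (j + 1) (by simp; omega))) ?_)
    by_cases hx : x ∈ B (j + 1) <;> simp [hx]

variable [Fintype X]

lemma le_ker_distortedMeasure (hE : Antitone E)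
    (hB : ∀ j ∈ Icc 1 J, ∀ ⦃x y⦄, E j x y → x ∈ B j → y ∈ B j) :
    ∀ j ≤ J, E j ≤ Setoid.ker (distortedMeasure E B δ j)
  | 0, _ => fun _ _ _ => rfl
  | j + 1, hj => fun x y hxy => by
    have hxy' := hE j.le_succ hxy
    simp only [Setoid.ker_def, distortedMeasure, distort,
      Setoid.ker_def.1 (le_ker_distortedMeasure hE hB j (by omega) hxy'),
      Setoid.ker_def.1 (le_ker_classDensity _ _ hxy'),
      Setoid.ker_def.1 (Setoid.le_ker_indicator (hB (j + 1) (by simp; omega)) hxy)]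

lemma sum_mul_distortedMeasure_succ (hE : Antitone E)
    (hB : ∀ j ∈ Icc 1 J, ∀ ⦃x y⦄, E j x y → x ∈ B j → y ∈ B j)
    (hδ : ∀ j ∈ Icc 1 J, δ j ∈ Set.Ioo 0 1) {j : ℕ} (hj : j < J) {h : X → ℝ}
    (hh : E j ≤ Setoid.ker h) :
    ∑ x, h x * distortedMeasure E B δ (j + 1) x = ∑ x, h x * distortedMeasure E B δ j x :=
  sum_mul_distort _ _ (hδ (j + 1) (by simp; omega)) (le_ker_distortedMeasure hE hB j hj.le) hh

lemma sum_distortedMeasure [Nonempty X] (hE : Antitone E)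
    (hB : ∀ j ∈ Icc 1 J, ∀ ⦃x y⦄, E j x y → x ∈ B j → y ∈ B j)
    (hδ : ∀ j ∈ Icc 1 J, δ j ∈ Set.Ioo 0 1) : ∀ j ≤ J, ∑ x, distortedMeasure E B δ j x = 1
  | 0, _ => by simp [distortedMeasure, Nat.card_eq_fintype_card]
  | j + 1, hj => by
    simpa using (sum_mul_distortedMeasure_succ hE hB hδ hj (h := 1) fun _ _ _ => rfl).trans
      (by simpa using sum_distortedMeasure hE hB hδ j (by omega))

lemma sum_indicator_mul_distortedMeasure_le (hE : Antitone E)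
    (hB : ∀ j ∈ Icc 1 J, ∀ ⦃x y⦄, E j x y → x ∈ B j → y ∈ B j)
    (hδ : ∀ j ∈ Icc 1 J, δ j ∈ Set.Ioo 0 1) {j : ℕ} (hj : j ∈ Icc 1 J) (hδj : δ j = 1 / 2)
    {k : ℕ} (hjk : j ≤ k) (hkJ : k ≤ J) :
    ∑ x, (B j).indicator 1 x * distortedMeasure E B δ k x ≤
      ∑ x, classDensity (E (j - 1)) (B j) x ^ 2 * distortedMeasure E B δ (j - 1) x := by
  induction k, hjk using Nat.le_induction with
  | base =>
    obtain ⟨i, rfl⟩ : ∃ i, j = i + 1 := ⟨j - 1, by simp at hj; omega⟩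
    rw [distortedMeasure, hδj, Nat.add_sub_cancel]
    exact sum_indicator_mul_distort_le _ _ (le_ker_distortedMeasure hE hB i (by omega))
      (distortedMeasure_nonneg hδ i (by omega))
  | succ k hjk ih =>
    rw [sum_mul_distortedMeasure_succ hE hB hδ hkJ
      ((hE hjk).trans (Setoid.le_ker_indicator (hB j hj)))]
    exact ih (by omega)

theorem exists_forall_notMem_of_sum_lt_one [Nonempty X] (hE : Antitone E)
    (hB : ∀ j ∈ Icc 1 J, ∀ ⦃x y⦄, E j x y → x ∈ B j → y ∈ B j)
    (hδ : ∀ j ∈ Icc 1 J, δ j = 1 / 2)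
    (hsum : ∑ j ∈ Icc 1 J,
      ∑ x, classDensity (E (j - 1)) (B j) x ^ 2 * distortedMeasure E B δ (j - 1) x < 1) :
    ∃ x, ∀ j ∈ Icc 1 J, x ∉ B j := by
  have hδ' : ∀ j ∈ Icc 1 J, δ j ∈ Set.Ioo 0 1 := fun j hj => by rw [hδ j hj]; norm_num
  by_contra! hcover
  set μ := distortedMeasure E B δ J
  have hμ0 : 0 ≤ μ := distortedMeasure_nonneg hδ' J le_rfl
  have hpoint : ∀ x, μ x ≤ ∑ j ∈ Icc 1 J, (B j).indicator 1 x * μ x := fun x => by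
    obtain ⟨j, hj, hx⟩ := hcover x
    calc μ x = (B j).indicator 1 x * μ x := by simp [hx]
      _ ≤ _ := single_le_sum (f := fun j => (B j).indicator 1 x * μ x)
          (fun i _ => mul_nonneg (Set.indicator_nonneg (fun _ _ => zero_le_one) x) (hμ0 x)) hj
  have := calc (1 : ℝ) = ∑ x, μ x := (sum_distortedMeasure hE hB hδ' J le_rfl).symm
    _ ≤ ∑ x, ∑ j ∈ Icc 1 J, (B j).indicator 1 x * μ x := sum_le_sum fun x _ => hpoint x
    _ = ∑ j ∈ Icc 1 J, ∑ x, (B j).indicator 1 x * μ x := sum_comm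
    _ ≤ _ := sum_le_sum fun j hj => sum_indicator_mul_distortedMeasure_le hE hB hδ' hj
        (hδ j hj) (mem_Icc.1 hj).2 le_rfl
  linarith

end DistortedMeasure

lemma Nat.exists_mem_Icc_and_not_sub_one {p : ℕ → Prop} {J : ℕ} (h0 : ¬ p 0) (hJ : p J) :
    ∃ j ∈ Icc 1 J, p j ∧ ¬ p (j - 1) := by
  have hpos : Nat.find ⟨J, hJ⟩ ≠ 0 := fun h => h0 (h ▸ Nat.find_spec ⟨J, hJ⟩)
  exact ⟨Nat.find ⟨J, hJ⟩, mem_Icc.2 ⟨Nat.one_le_iff_ne_zero.2 hpos, Nat.find_min' _ hJ⟩,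
    Nat.find_spec _, Nat.find_min _ (by omega)⟩

lemma Submodule.quotientRel_mono {R M : Type*} [Ring R] [AddCommGroup M] [Module R M]
    {p q : Submodule R M} (h : p ≤ q) : p.quotientRel ≤ q.quotientRel := fun _ _ hxy => by
  rw [Submodule.quotientRel_def] at hxy ⊢
  exact h hxy

lemma Ideal.antitone_prod_Icc {R : Type*} [CommSemiring R] (f : ℕ → Ideal R) :
    Antitone fun j => ∏ i ∈ Icc 1 j, f i := fun _ _ hjk =>
  Ideal.le_of_dvd (prod_dvd_prod_of_subset _ _ _ (Icc_subset_Icc_right hjk))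

lemma Ideal.mem_biUnion_image_mk_coset_of_quotientRel {R ι : Type*} [CommRing R] {S : Set ι}
    {Q K : Ideal R} {I : ι → Ideal R} {a : ι → R} (hQK : Q ≤ K) (hKI : ∀ i ∈ S, K ≤ I i)
    {x y : R ⧸ Q} (hxy : Submodule.quotientRel (K.map (Ideal.Quotient.mk Q)) x y)
    (hx : x ∈ ⋃ i ∈ S, Ideal.Quotient.mk Q '' {r | r - a i ∈ I i}) :
    y ∈ ⋃ i ∈ S, Ideal.Quotient.mk Q '' {r | r - a i ∈ I i} := by
  obtain ⟨i, hi, r, hr, rfl⟩ := Set.mem_iUnion₂.1 hx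
  obtain ⟨s, rfl⟩ := Ideal.Quotient.mk_surjective y
  rw [Submodule.quotientRel_def, ← map_sub, Ideal.mem_quotient_iff_mem hQK] at hxy
  exact Set.mem_iUnion₂.2 ⟨i, hi, s, by simpa using (I i).sub_mem hr (hKI i hi hxy), rfl⟩

theorem stmt6_general
    -- R is a Dedekind domain (not a field) with all nontrivial quotients finite
    (R : Type*) [CommRing R] [IsDedekindDomain R]
    (hfin : ∀ I : Ideal R, I ≠ ⊥ → Finite (R ⧸ I))
    -- the collection A = {a i + I i}
    (m : ℕ) (a : Fin m → R) (I : Fin m → Ideal R)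
    (hItop : ∀ i, I i ≠ ⊤)
    -- Q = I_1 ∩ ⋯ ∩ I_m with prime factorization P_1^{ν_1} ⋯ P_J^{ν_J},
    -- |P_1| ≤ ⋯ ≤ |P_J|
    (Q : Ideal R) (hQ : Q = ⨅ i, I i)
    (J : ℕ) (P : ℕ → Ideal R) (ν : ℕ → ℕ)
    (hPprime : ∀ j ∈ Finset.Icc 1 J, (P j).IsPrime ∧ P j ≠ ⊥)
    (hfact : Q = ∏ j ∈ Finset.Icc 1 J, P j ^ ν j)
    -- the partial products Q_j (so Q_0 = R)
    (Qp : ℕ → Ideal R) (hQp : ∀ j ≤ J, Qp j = ∏ i ∈ Finset.Icc 1 j, P i ^ ν i)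
    -- the sets B_j ⊆ R/Q
    (B : ℕ → Set (R ⧸ Q))
    (hB : ∀ j ∈ Finset.Icc 1 J, B j =
      ⋃ i ∈ {i : Fin m | I i ∣ Qp j ∧ ¬ I i ∣ Qp (j - 1)},
        Ideal.Quotient.mk Q '' {r : R | r - a i ∈ I i})
    -- the fibres F_j(ā) of the projections π_j : R/Q → R/Q_j
    (Fib : ℕ → (R ⧸ Q) → Set (R ⧸ Q))
    (hFib : ∀ j ≤ J, ∀ x, Fib j x =
      {y : R ⧸ Q | y - x ∈ Ideal.map (Ideal.Quotient.mk Q) (Qp j)})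
    -- α_j(ā) = #(F_{j-1}(ā) ∩ B_j) / #F_{j-1}(ā)
    (α : ℕ → (R ⧸ Q) → ℝ)
    (hα : ∀ j ∈ Finset.Icc 1 J, ∀ x, α j x =
      (Nat.card ↥(Fib (j - 1) x ∩ B j) : ℝ) / (Nat.card ↥(Fib (j - 1) x) : ℝ))
    -- take δ_j = 1/2 for all 1 ≤ j ≤ J
    (δ : ℕ → ℝ) (hδ : ∀ j ∈ Finset.Icc 1 J, δ j = 1 / 2)
    -- the distorted measures P_0, …, P_J
    (μ : ℕ → (R ⧸ Q) → ℝ)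
    (hμ0 : ∀ x, μ 0 x = 1 / (Nat.card (R ⧸ Q) : ℝ))
    (hμ : ∀ j ∈ Finset.Icc 1 J, ∀ x, μ j x =
      if α j x < δ j then
        μ (j - 1) x * (if x ∈ B j then 0 else 1) / (1 - α j x)
      else
        μ (j - 1) x * (α j x - if x ∈ B j then δ j else 0) / (α j x * (1 - δ j)))
    -- the moments M_j^{(k)}
    (M : ℕ → ℕ → ℝ)
    (hM : ∀ k j, M k j = ∑ᶠ x : R ⧸ Q, α j x ^ k * μ (j - 1) x)
    -- the hypothesis ∑_{j=1}^J M_j^{(2)} < 1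
    (hsum : ∑ j ∈ Finset.Icc 1 J, M 2 j < 1) :
    (⋃ i, {r : R | r - a i ∈ I i}) ≠ Set.univ := by
  intro hcover
  have hQbot : Q ≠ ⊥ := by
    rw [hfact, ← Ideal.zero_eq_bot]
    exact prod_ne_zero_iff.2 fun j hj => pow_ne_zero _ (hPprime j hj).2
  have := @Fintype.ofFinite _ (hfin Q hQbot)
  have hQf := Ideal.antitone_prod_Icc fun i => P i ^ ν i
  set E : ℕ → Setoid (R ⧸ Q) := fun j =>
    Submodule.quotientRel ((∏ i ∈ Icc 1 j, P i ^ ν i).map (Ideal.Quotient.mk Q))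
  have hE : Antitone E := fun j k hjk => Submodule.quotientRel_mono (Ideal.map_mono (hQf hjk))
  have hBsat : ∀ j ∈ Icc 1 J, ∀ ⦃x y⦄, E j x y → x ∈ B j → y ∈ B j := fun j hj x y hxy hx => by
    rw [hB j hj] at hx ⊢
    exact Ideal.mem_biUnion_image_mk_coset_of_quotientRel (hfact.trans_le (hQf (mem_Icc.1 hj).2))
      (fun i hi => (hQp j (mem_Icc.1 hj).2).symm.trans_le (Ideal.le_of_dvd hi.1)) hxy hx
  have hαE : ∀ j ∈ Icc 1 J, α j = classDensity (E (j - 1)) (B j) := fun j hj => by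
    have hj' : j - 1 ≤ J := (Nat.sub_le j 1).trans (mem_Icc.1 hj).2
    ext x
    have hFib' : Fib (j - 1) x = {y | E (j - 1) x y} := by
      ext y
      simp [hFib (j - 1) hj', hQp (j - 1) hj', E, Submodule.quotientRel_def, sub_mem_comm_iff]
    rw [hα j hj, classDensity, hFib']
  have hμE := eq_distortedMeasure hαE hμ0 hμ
  obtain ⟨x, hx⟩ := exists_forall_notMem_of_sum_lt_one hE hBsat hδ <| by
    convert hsum using 2 with j hj
    rw [hM, finsum_eq_sum_of_fintype, hαE j hj, hμE (j - 1) ((Nat.sub_le j 1).trans (mem_Icc.1 hj).2)]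
  obtain ⟨r, rfl⟩ := Ideal.Quotient.mk_surjective x
  obtain ⟨i, hi⟩ := Set.mem_iUnion.1 (hcover ▸ Set.mem_univ r)
  obtain ⟨j, hj, hdvd, hndvd⟩ := Nat.exists_mem_Icc_and_not_sub_one (p := fun j => I i ∣ Qp j)
    (by simpa [hQp 0 J.zero_le, Ideal.dvd_iff_le] using hItop i)
    (by rw [hQp J le_rfl, ← hfact, hQ, Ideal.dvd_iff_le]; exact iInf_le I i)
  exact hx j hj (by rw [hB j hj]; exact Set.mem_iUnion₂.2 ⟨i, ⟨hdvd, hndvd⟩, r, hi, rfl⟩)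

/-- **The distortion method with δ_j = 1/2.**
If `∑_{j=1}^J M_j^{(2)} < 1`, then the collection `A` does not cover `R`. -/
theorem stmt6
    -- R is a Dedekind domain (not a field) with all nontrivial quotients finite
    (R : Type*) [CommRing R] [IsDedekindDomain R] (hnotfield : ¬ IsField R)
    (hfin : ∀ I : Ideal R, I ≠ ⊥ → Finite (R ⧸ I))
    -- the collection A = {a i + I i}
    (m : ℕ) (a : Fin m → R) (I : Fin m → Ideal R)
    (hIbot : ∀ i, I i ≠ ⊥) (hItop : ∀ i, I i ≠ ⊤)
    -- Q = I_1 ∩ ⋯ ∩ I_m with prime factorization P_1^{ν_1} ⋯ P_J^{ν_J},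
    -- |P_1| ≤ ⋯ ≤ |P_J|
    (Q : Ideal R) (hQ : Q = ⨅ i, I i)
    (J : ℕ) (P : ℕ → Ideal R) (ν : ℕ → ℕ)
    (hPprime : ∀ j ∈ Finset.Icc 1 J, (P j).IsPrime ∧ P j ≠ ⊥)
    (hν : ∀ j ∈ Finset.Icc 1 J, 1 ≤ ν j)
    (hPinj : ∀ j ∈ Finset.Icc 1 J, ∀ k ∈ Finset.Icc 1 J, P j = P k → j = k)
    (hPord : ∀ j ∈ Finset.Icc 1 J, ∀ k ∈ Finset.Icc 1 J, j ≤ k →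
      Nat.card (R ⧸ P j) ≤ Nat.card (R ⧸ P k))
    (hfact : Q = ∏ j ∈ Finset.Icc 1 J, P j ^ ν j)
    -- the partial products Q_j (so Q_0 = R)
    (Qp : ℕ → Ideal R) (hQp : ∀ j ≤ J, Qp j = ∏ i ∈ Finset.Icc 1 j, P i ^ ν i)
    -- the sets B_j ⊆ R/Q
    (B : ℕ → Set (R ⧸ Q))
    (hB : ∀ j ∈ Finset.Icc 1 J, B j =
      ⋃ i ∈ {i : Fin m | I i ∣ Qp j ∧ ¬ I i ∣ Qp (j - 1)},
        Ideal.Quotient.mk Q '' {r : R | r - a i ∈ I i})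
    -- the fibres F_j(ā) of the projections π_j : R/Q → R/Q_j
    (Fib : ℕ → (R ⧸ Q) → Set (R ⧸ Q))
    (hFib : ∀ j ≤ J, ∀ x, Fib j x =
      {y : R ⧸ Q | y - x ∈ Ideal.map (Ideal.Quotient.mk Q) (Qp j)})
    -- α_j(ā) = #(F_{j-1}(ā) ∩ B_j) / #F_{j-1}(ā)
    (α : ℕ → (R ⧸ Q) → ℝ)
    (hα : ∀ j ∈ Finset.Icc 1 J, ∀ x, α j x =
      (Nat.card ↥(Fib (j - 1) x ∩ B j) : ℝ) / (Nat.card ↥(Fib (j - 1) x) : ℝ))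
    -- take δ_j = 1/2 for all 1 ≤ j ≤ J
    (δ : ℕ → ℝ) (hδ : ∀ j ∈ Finset.Icc 1 J, δ j = 1 / 2)
    -- the distorted measures P_0, …, P_J
    (μ : ℕ → (R ⧸ Q) → ℝ)
    (hμ0 : ∀ x, μ 0 x = 1 / (Nat.card (R ⧸ Q) : ℝ))
    (hμ : ∀ j ∈ Finset.Icc 1 J, ∀ x, μ j x =
      if α j x < δ j then
        μ (j - 1) x * (if x ∈ B j then 0 else 1) / (1 - α j x)
      else
        μ (j - 1) x * (α j x - if x ∈ B j then δ j else 0) / (α j x * (1 - δ j)))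
    -- the moments M_j^{(k)}
    (M : ℕ → ℕ → ℝ)
    (hM : ∀ k j, M k j = ∑ᶠ x : R ⧸ Q, α j x ^ k * μ (j - 1) x)
    -- the hypothesis ∑_{j=1}^J M_j^{(2)} < 1
    (hsum : ∑ j ∈ Finset.Icc 1 J, M 2 j < 1) :
    (⋃ i, {r : R | r - a i ∈ I i}) ≠ Set.univ :=
  stmt6_general R hfin m a I hItop Q hQ J P ν hPprime hfact Qp hQp B hB Fib hFib α hα δ hδ μ hμ0 hμ
    M hM hsum
end

section
/- With the setup as in the context, for each 0 ≤ j ≤ J, each a ∈ R, and each ideal I ⊆ R with I ∣ Q, one has P_j(a + I) ≤ (1/|I|) · ∏_{i ≤ j, P_i ∣ I} 1/(1 − δ_i), where P_j(a + I) denotes ∑_{ā ∈ R/Q, ā ⊆ a + I} P_j(ā). -/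
open scoped Classical

section counting
variable {S : Type*} [CommRing S] [Fintype S]

lemma coset_card' (A : Ideal S) (c : S) :
    (Finset.univ.filter (fun x : S => x - c ∈ A)).card = Nat.card A := by
  classical
  rw [Nat.card_eq_fintype_card, Fintype.card_subtype]
  apply Finset.card_nbij' (fun x => x - c) (fun x => x + c)
  · intro x hx
    simp only [Finset.mem_coe, Finset.mem_filter, Finset.mem_univ, true_and] at hx ⊢
    exact hx
  · intro x hx
    simp only [Finset.mem_filter, Finset.mem_univ, true_and] at hx ⊢
    simpa using hx
  · intro x _; simp
  · intro x _; simp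

lemma card_total (A : Ideal S) :
    Fintype.card S = Nat.card (S ⧸ A) * Nat.card A := by
  classical
  haveI : Finite (S ⧸ A) := Finite.of_surjective _ Ideal.Quotient.mk_surjective
  haveI : Fintype (S ⧸ A) := Fintype.ofFinite _
  have hmt : ∀ x ∈ (Finset.univ : Finset S), Ideal.Quotient.mk A x ∈ (Finset.univ : Finset (S ⧸ A)) :=
    fun x _ => Finset.mem_univ _
  have h := Finset.card_eq_sum_card_fiberwise hmt
  rw [← Finset.card_univ, h]
  have h2 : ∀ y : S ⧸ A,
      (Finset.univ.filter (fun x : S => Ideal.Quotient.mk A x = y)).card = Nat.card A := by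
    intro y
    obtain ⟨z, rfl⟩ := Ideal.Quotient.mk_surjective y
    rw [← coset_card' A z]
    congr 1
    ext x
    simp [Ideal.Quotient.eq]
  rw [Finset.sum_congr rfl (fun y _ => h2 y), Finset.sum_const, smul_eq_mul, Finset.card_univ]
  simp [Nat.card_eq_fintype_card]

lemma crux (A H K : Ideal S) (hHK : H ≤ K) (hsat : K ≤ (A ⊓ K) ⊔ H)
    (Bs : Set S) (c w : S)
    (hBsat : ∀ x y : S, y - x ∈ H → (x ∈ Bs ↔ y ∈ Bs)) :
    (Finset.univ.filter (fun x : S => (x - c ∈ A ∧ x - w ∈ K) ∧ x ∈ Bs)).card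
        * (Finset.univ.filter (fun x : S => x - w ∈ K)).card
      = (Finset.univ.filter (fun x : S => x - w ∈ K ∧ x ∈ Bs)).card
        * (Finset.univ.filter (fun x : S => x - c ∈ A ∧ x - w ∈ K)).card := by
  classical
  set q := Ideal.Quotient.mk H with hq
  set Ff := Finset.univ.filter (fun x : S => x - w ∈ K) with hFf
  set Cf := Finset.univ.filter (fun x : S => x - c ∈ A ∧ x - w ∈ K) with hCf
  set Bf := Finset.univ.filter (fun x : S => x - w ∈ K ∧ x ∈ Bs) with hBf
  set Mf := Finset.univ.filter (fun x : S => (x - c ∈ A ∧ x - w ∈ K) ∧ x ∈ Bs) with hMf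
  set T := Ff.image q with hT
  have hwF : w ∈ Ff := by simp [hFf]
  have hCF : ∀ x ∈ Cf, x ∈ Ff := by
    intro x hx; simp only [hCf, hFf, Finset.mem_filter, Finset.mem_univ, true_and] at hx ⊢
    exact hx.2
  have hBF : ∀ x ∈ Bf, x ∈ Ff := by
    intro x hx; simp only [hBf, hFf, Finset.mem_filter, Finset.mem_univ, true_and] at hx ⊢
    exact hx.1
  have hMF : ∀ x ∈ Mf, x ∈ Ff := by
    intro x hx; simp only [hMf, hFf, Finset.mem_filter, Finset.mem_univ, true_and] at hx ⊢
    exact hx.1.2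
  have htrans : ∀ z ∈ Ff, ∀ z' ∈ Ff,
      (Cf.filter (fun x => q x = q z)).card = (Cf.filter (fun x => q x = q z')).card := by
    intro z hz z' hz'
    have hzz' : z' - z ∈ K := by
      have h1 : z - w ∈ K := by simpa [hFf] using (Finset.mem_filter.1 hz).2
      have h2 : z' - w ∈ K := by simpa [hFf] using (Finset.mem_filter.1 hz').2
      have := K.sub_mem h2 h1
      simpa using this
    obtain ⟨u, hu, h, hh, huh⟩ := Submodule.mem_sup.1 (hsat hzz')
    have hu' := Submodule.mem_inf.1 hu
    have hqu : q u = q z' - q z := by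
      have hmem : z' - z - u ∈ H := by
        have e : z' - z - u = h := by rw [← huh]; ring
        rw [e]; exact hh
      have h0 : q z' - q z - q u = 0 := by
        rw [← map_sub, ← map_sub]
        exact Ideal.Quotient.eq_zero_iff_mem.2 hmem
      exact (sub_eq_zero.1 h0).symm
    apply Finset.card_nbij' (fun x => x + u) (fun x => x - u)
    · intro x hx
      simp only [Finset.mem_coe, hCf, Finset.mem_filter, Finset.mem_univ, true_and] at hx ⊢
      obtain ⟨⟨hxA, hxK⟩, hxq⟩ := hx
      refine ⟨⟨?_, ?_⟩, ?_⟩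
      · have := A.add_mem hxA hu'.1
        have e : x + u - c = x - c + u := by ring
        rw [e]; exact this
      · have := K.add_mem hxK hu'.2
        have e : x + u - w = x - w + u := by ring
        rw [e]; exact this
      · rw [map_add, hxq, hqu]; ring
    · intro x hx
      simp only [Finset.mem_coe, hCf, Finset.mem_filter, Finset.mem_univ, true_and] at hx ⊢
      obtain ⟨⟨hxA, hxK⟩, hxq⟩ := hx
      refine ⟨⟨?_, ?_⟩, ?_⟩
      · have := A.sub_mem hxA hu'.1
        have e : x - u - c = x - c - u := by ring
        rw [e]; exact this
      · have := K.sub_mem hxK hu'.2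
        have e : x - u - w = x - w - u := by ring
        rw [e]; exact this
      · rw [map_sub, hxq, hqu]; ring
    · intro x _; simp
    · intro x _; simp
  have hFfib : ∀ z ∈ Ff, (Ff.filter (fun x => q x = q z)).card = Nat.card H := by
    intro z hz
    rw [← coset_card' H z]
    congr 1
    ext x
    simp only [hFf, Finset.mem_filter, Finset.mem_univ, true_and]
    constructor
    · rintro ⟨-, hx⟩
      exact (Ideal.Quotient.eq).1 hx
    · intro hx
      refine ⟨?_, (Ideal.Quotient.eq).2 hx⟩
      have hzw : z - w ∈ K := by simpa [hFf] using (Finset.mem_filter.1 hz).2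
      have := K.add_mem (hHK hx) hzw
      have e : x - z + (z - w) = x - w := by ring
      rw [e] at this; exact this
  have hBfib : ∀ z ∈ Ff, Bf.filter (fun x => q x = q z)
      = if z ∈ Bs then Ff.filter (fun x => q x = q z) else ∅ := by
    intro z hz
    split_ifs with hzB
    · ext x
      simp only [hBf, hFf, Finset.mem_filter, Finset.mem_univ, true_and]
      constructor
      · rintro ⟨⟨h1, _⟩, h2⟩; exact ⟨h1, h2⟩
      · rintro ⟨h1, h2⟩
        exact ⟨⟨h1, (hBsat z x ((Ideal.Quotient.eq).1 h2)).1 hzB⟩, h2⟩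
    · ext x
      simp only [hBf, Finset.mem_filter, Finset.mem_univ, true_and, Finset.notMem_empty,
        iff_false, not_and]
      rintro ⟨h1, h2⟩ h3
      exact hzB ((hBsat z x ((Ideal.Quotient.eq).1 h3)).2 h2)
  have hMfib : ∀ z ∈ Ff, Mf.filter (fun x => q x = q z)
      = if z ∈ Bs then Cf.filter (fun x => q x = q z) else ∅ := by
    intro z hz
    split_ifs with hzB
    · ext x
      simp only [hMf, hCf, Finset.mem_filter, Finset.mem_univ, true_and]
      constructor
      · rintro ⟨⟨h1, _⟩, h2⟩; exact ⟨h1, h2⟩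
      · rintro ⟨h1, h2⟩
        exact ⟨⟨h1, (hBsat z x ((Ideal.Quotient.eq).1 h2)).1 hzB⟩, h2⟩
    · ext x
      simp only [hMf, Finset.mem_filter, Finset.mem_univ, true_and, Finset.notMem_empty,
        iff_false, not_and]
      rintro ⟨h1, h2⟩ h3
      exact hzB ((hBsat z x ((Ideal.Quotient.eq).1 h3)).2 h2)
  set t0 := (Cf.filter (fun x => q x = q w)).card with ht0
  have hFcard : Ff.card = T.card * Nat.card H := by
    rw [Finset.card_eq_sum_card_fiberwise (fun x hx => Finset.mem_image_of_mem q hx)]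
    rw [Finset.sum_congr rfl (fun y hy => ?_), Finset.sum_const, smul_eq_mul]
    obtain ⟨z, hz, rfl⟩ := Finset.mem_image.1 hy
    exact hFfib z hz
  have hCcard : Cf.card = T.card * t0 := by
    rw [Finset.card_eq_sum_card_fiberwise (fun x hx => Finset.mem_image_of_mem q (hCF x hx))]
    rw [Finset.sum_congr rfl (fun y hy => ?_), Finset.sum_const, smul_eq_mul]
    obtain ⟨z, hz, rfl⟩ := Finset.mem_image.1 hy
    exact htrans z hz w hwF
  have hMB : ∀ y ∈ T, (Mf.filter (fun x => q x = y)).card * Nat.card H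
      = (Bf.filter (fun x => q x = y)).card * t0 := by
    intro y hy
    obtain ⟨z, hz, rfl⟩ := Finset.mem_image.1 hy
    rw [hMfib z hz, hBfib z hz]
    split_ifs with hzB
    · rw [hFfib z hz, htrans z hz w hwF]
      ring
    · simp
  have hMcard : Mf.card * Nat.card H = Bf.card * t0 := by
    rw [Finset.card_eq_sum_card_fiberwise (fun x hx => Finset.mem_image_of_mem q (hMF x hx)),
      Finset.card_eq_sum_card_fiberwise (fun x hx => Finset.mem_image_of_mem q (hBF x hx)),
      Finset.sum_mul, Finset.sum_mul]
    exact Finset.sum_congr rfl hMB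
  calc Mf.card * Ff.card = Mf.card * (T.card * Nat.card H) := by rw [hFcard]
    _ = T.card * (Mf.card * Nat.card H) := by ring
    _ = T.card * (Bf.card * t0) := by rw [hMcard]
    _ = Bf.card * (T.card * t0) := by ring
    _ = Bf.card * Cf.card := by rw [← hCcard]
end counting
set_option maxHeartbeats 4000000 in
/-- For each `0 ≤ j ≤ J`, `a ∈ R` and ideal `I' ∣ Q`,
`P_j(a + I') ≤ (1/|I'|) · ∏_{i ≤ j, P_i ∣ I'} 1/(1 - δ_i)`. -/
theorem stmt8
    -- R is a Dedekind domain (not a field) with all nontrivial quotients finite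
    (R : Type*) [CommRing R] [IsDedekindDomain R] (hnotfield : ¬ IsField R)
    (hfin : ∀ I : Ideal R, I ≠ ⊥ → Finite (R ⧸ I))
    -- the collection A = {a i + I i}
    (m : ℕ) (a : Fin m → R) (I : Fin m → Ideal R)
    (hIbot : ∀ i, I i ≠ ⊥) (hItop : ∀ i, I i ≠ ⊤)
    -- Q = I_1 ∩ ⋯ ∩ I_m with prime factorization P_1^{ν_1} ⋯ P_J^{ν_J},
    -- |P_1| ≤ ⋯ ≤ |P_J|
    (Q : Ideal R) (hQ : Q = ⨅ i, I i)
    (J : ℕ) (P : ℕ → Ideal R) (ν : ℕ → ℕ)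
    (hPprime : ∀ j ∈ Finset.Icc 1 J, (P j).IsPrime ∧ P j ≠ ⊥)
    (hν : ∀ j ∈ Finset.Icc 1 J, 1 ≤ ν j)
    (hPinj : ∀ j ∈ Finset.Icc 1 J, ∀ k ∈ Finset.Icc 1 J, P j = P k → j = k)
    (hPord : ∀ j ∈ Finset.Icc 1 J, ∀ k ∈ Finset.Icc 1 J, j ≤ k →
      Nat.card (R ⧸ P j) ≤ Nat.card (R ⧸ P k))
    (hfact : Q = ∏ j ∈ Finset.Icc 1 J, P j ^ ν j)
    -- the partial products Q_j (so Q_0 = R)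
    (Qp : ℕ → Ideal R) (hQp : ∀ j ≤ J, Qp j = ∏ i ∈ Finset.Icc 1 j, P i ^ ν i)
    -- the sets B_j ⊆ R/Q
    (B : ℕ → Set (R ⧸ Q))
    (hB : ∀ j ∈ Finset.Icc 1 J, B j =
      ⋃ i ∈ {i : Fin m | I i ∣ Qp j ∧ ¬ I i ∣ Qp (j - 1)},
        Ideal.Quotient.mk Q '' {r : R | r - a i ∈ I i})
    -- the fibres F_j(ā) of the projections π_j : R/Q → R/Q_j
    (Fib : ℕ → (R ⧸ Q) → Set (R ⧸ Q))
    (hFib : ∀ j ≤ J, ∀ x, Fib j x =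
      {y : R ⧸ Q | y - x ∈ Ideal.map (Ideal.Quotient.mk Q) (Qp j)})
    -- α_j(ā) = #(F_{j-1}(ā) ∩ B_j) / #F_{j-1}(ā)
    (α : ℕ → (R ⧸ Q) → ℝ)
    (hα : ∀ j ∈ Finset.Icc 1 J, ∀ x, α j x =
      (Nat.card ↥(Fib (j - 1) x ∩ B j) : ℝ) / (Nat.card ↥(Fib (j - 1) x) : ℝ))
    -- the distortion parameters δ_j ∈ [0, 1/2]
    (δ : ℕ → ℝ) (hδ : ∀ j ∈ Finset.Icc 1 J, 0 ≤ δ j ∧ δ j ≤ 1 / 2)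
    -- the distorted measures P_0, …, P_J
    (μ : ℕ → (R ⧸ Q) → ℝ)
    (hμ0 : ∀ x, μ 0 x = 1 / (Nat.card (R ⧸ Q) : ℝ))
    (hμ : ∀ j ∈ Finset.Icc 1 J, ∀ x, μ j x =
      if α j x < δ j then
        μ (j - 1) x * (if x ∈ B j then 0 else 1) / (1 - α j x)
      else
        μ (j - 1) x * (α j x - if x ∈ B j then δ j else 0) / (α j x * (1 - δ j)))
    -- the conclusion: for 0 ≤ j ≤ J, a ∈ R and ideals I' ∣ Q,
    -- P_j(a + I') ≤ (1/|I'|) ∏_{i ≤ j, P_i ∣ I'} (1 - δ_i)⁻¹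
    : ∀ j ≤ J, ∀ a' : R, ∀ I' : Ideal R, I' ∣ Q →
      (∑ᶠ x ∈ Ideal.Quotient.mk Q '' {r : R | r - a' ∈ I'}, μ j x) ≤
        (1 / (Nat.card (R ⧸ I') : ℝ)) *
          ∏ i ∈ (Finset.Icc 1 j).filter (fun i => P i ∣ I'), (1 - δ i)⁻¹ := by
  classical
  have hQbot : Q ≠ ⊥ := by
    rw [hfact, ← Ideal.zero_eq_bot, Finset.prod_ne_zero_iff]
    intro j hj
    exact pow_ne_zero _ (by rw [Ne, Ideal.zero_eq_bot]; exact (hPprime j hj).2)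
  haveI : Finite (R ⧸ Q) := hfin Q hQbot
  haveI : Fintype (R ⧸ Q) := Fintype.ofFinite _
  -- basic facts about the Qp
  have hICC : ∀ n : ℕ, Finset.Icc 1 (n + 1) = insert (n + 1) (Finset.Icc 1 n) := by
    intro n; ext k; simp only [Finset.mem_Icc, Finset.mem_insert]; omega
  have hQpstep : ∀ n : ℕ, n + 1 ≤ J → Qp (n + 1) = P (n + 1) ^ ν (n + 1) * Qp n := by
    intro n h
    rw [hQp (n + 1) h, hQp n (by omega), hICC n,
      Finset.prod_insert (by simp only [Finset.mem_Icc]; omega)]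
  have hQpdvd : ∀ j ≤ J, Qp j ∣ Q := by
    intro j hj
    rw [hfact, hQp j hj]
    exact Finset.prod_dvd_prod_of_subset _ _ _ (Finset.Icc_subset_Icc_right hj)
  have hQpmono : ∀ n : ℕ, n + 1 ≤ J → Qp (n + 1) ≤ Qp n := by
    intro n h
    rw [hQpstep n h]
    exact (Ideal.mul_le_inf.trans inf_le_right : P (n + 1) ^ ν (n + 1) * Qp n ≤ Qp n)
  -- membership in images of cosets
  have hmemimg : ∀ (I1 : Ideal R) (b : R) (x : R ⧸ Q),
      x ∈ Ideal.Quotient.mk Q '' {r : R | r - b ∈ I1}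
        ↔ x - Ideal.Quotient.mk Q b ∈ Ideal.map (Ideal.Quotient.mk Q) I1 := by
    intro I1 b x
    constructor
    · rintro ⟨r, hr, rfl⟩
      rw [← map_sub]
      exact Ideal.mem_map_of_mem _ hr
    · intro hx
      obtain ⟨s, hs, hsx⟩ :=
        (Ideal.mem_map_iff_of_surjective _ Ideal.Quotient.mk_surjective).1 hx
      refine ⟨s + b, by simpa using hs, ?_⟩
      rw [map_add, hsx]; ring
  -- saturation of B (n+1) with respect to Qp (n+1)
  have hBsat : ∀ n : ℕ, n + 1 ≤ J → ∀ x y : R ⧸ Q,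
      y - x ∈ Ideal.map (Ideal.Quotient.mk Q) (Qp (n + 1)) →
      (x ∈ B (n + 1) ↔ y ∈ B (n + 1)) := by
    have key : ∀ n : ℕ, n + 1 ≤ J → ∀ x y : R ⧸ Q,
        y - x ∈ Ideal.map (Ideal.Quotient.mk Q) (Qp (n + 1)) →
        x ∈ B (n + 1) → y ∈ B (n + 1) := by
      intro n hn x y hxy hx
      have hmem : n + 1 ∈ Finset.Icc 1 J := Finset.mem_Icc.2 ⟨by omega, hn⟩
      rw [hB (n + 1) hmem] at hx ⊢
      simp only [Set.mem_iUnion, Set.mem_setOf_eq, exists_prop] at hx ⊢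
      obtain ⟨i, ⟨hd1, hd2⟩, hxi⟩ := hx
      refine ⟨i, ⟨hd1, hd2⟩, ?_⟩
      rw [hmemimg] at hxi ⊢
      have hle : Ideal.map (Ideal.Quotient.mk Q) (Qp (n + 1))
          ≤ Ideal.map (Ideal.Quotient.mk Q) (I i) := Ideal.map_mono (Ideal.dvd_iff_le.1 hd1)
      have h2 := Ideal.add_mem _ hxi (hle hxy)
      have e : x - Ideal.Quotient.mk Q (a i) + (y - x) = y - Ideal.Quotient.mk Q (a i) := by
        ring
      rw [e] at h2; exact h2
    intro n hn x y hxy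
    refine ⟨key n hn x y hxy, key n hn y x ?_⟩
    have := Submodule.neg_mem _ hxy
    simpa using this
  -- α is nonnegative
  have hαnn : ∀ n : ℕ, n + 1 ≤ J → ∀ x, 0 ≤ α (n + 1) x := by
    intro n hn x
    have hmem : n + 1 ∈ Finset.Icc 1 J := Finset.mem_Icc.2 ⟨by omega, hn⟩
    rw [hα (n + 1) hmem x]
    positivity
  -- α is constant on fibres of π_n
  have hαconst : ∀ n : ℕ, n + 1 ≤ J → ∀ x y : R ⧸ Q,
      y - x ∈ Ideal.map (Ideal.Quotient.mk Q) (Qp n) → α (n + 1) x = α (n + 1) y := by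
    intro n hn x y hxy
    have hmem : n + 1 ∈ Finset.Icc 1 J := Finset.mem_Icc.2 ⟨by omega, hn⟩
    have hfx : Fib n x = Fib n y := by
      rw [hFib n (by omega) x, hFib n (by omega) y]
      ext z
      simp only [Set.mem_setOf_eq]
      constructor
      · intro hz
        have h2 := Submodule.sub_mem _ hz hxy
        have e : z - x - (y - x) = z - y := by ring
        rw [e] at h2; exact h2
      · intro hz
        have h2 := Submodule.add_mem _ hz hxy
        have e : z - y + (y - x) = z - x := by ring
        rw [e] at h2; exact h2
    rw [hα (n + 1) hmem x, hα (n + 1) hmem y]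
    simp only [Nat.add_sub_cancel]
    rw [hfx]
  -- μ is nonnegative
  have hμnonneg : ∀ j, j ≤ J → ∀ x, 0 ≤ μ j x := by
    intro j
    induction j with
    | zero =>
      intro _ x
      rw [hμ0 x]
      positivity
    | succ n ih =>
      intro hn x
      have hn' : n ≤ J := by omega
      have hmem : n + 1 ∈ Finset.Icc 1 J := Finset.mem_Icc.2 ⟨by omega, hn⟩
      have hp := ih hn' x
      obtain ⟨hδ0, hδ2⟩ := hδ (n + 1) hmem
      have hα0 : 0 ≤ α (n + 1) x := hαnn n hn x
      rw [hμ (n + 1) hmem x]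
      simp only [Nat.add_sub_cancel]
      split_ifs with h1 h2
      · simp
      · exact div_nonneg (by linarith [mul_nonneg hp (zero_le_one (α := ℝ))]) (by linarith)
      · exact div_nonneg (mul_nonneg hp (by linarith [not_lt.1 h1]))
          (mul_nonneg hα0 (by linarith))
      · exact div_nonneg (mul_nonneg hp (by linarith [not_lt.1 h1]))
          (mul_nonneg hα0 (by linarith))
  -- μ is constant on fibres of π_j
  have hμconst : ∀ j, j ≤ J → ∀ x y : R ⧸ Q,
      y - x ∈ Ideal.map (Ideal.Quotient.mk Q) (Qp j) → μ j x = μ j y := by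
    intro j
    induction j with
    | zero => intro _ x y _; rw [hμ0, hμ0]
    | succ n ih =>
      intro hn x y hxy
      have hn' : n ≤ J := by omega
      have hmem : n + 1 ∈ Finset.Icc 1 J := Finset.mem_Icc.2 ⟨by omega, hn⟩
      have hle : Ideal.map (Ideal.Quotient.mk Q) (Qp (n + 1))
          ≤ Ideal.map (Ideal.Quotient.mk Q) (Qp n) := Ideal.map_mono (hQpmono n hn)
      have hμn := ih hn' x y (hle hxy)
      have hαe := hαconst n hn x y (hle hxy)
      have hBe := hBsat n hn x y hxy
      rw [hμ (n + 1) hmem x, hμ (n + 1) hmem y]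
      simp only [Nat.add_sub_cancel]
      rw [hμn, hαe]
      simp only [hBe]
  -- reduce to concrete finite sums
  suffices h : ∀ j ≤ J, ∀ (a' : R) (I' : Ideal R), I' ∣ Q →
      (∑ x ∈ Finset.univ.filter
          (fun x : R ⧸ Q => x - Ideal.Quotient.mk Q a' ∈ Ideal.map (Ideal.Quotient.mk Q) I'),
        μ j x)
        ≤ (1 / (Nat.card (R ⧸ I') : ℝ)) *
          ∏ i ∈ (Finset.Icc 1 j).filter (fun i => P i ∣ I'), (1 - δ i)⁻¹ by
    intro j hj a' I' hdvd
    have hset : (Ideal.Quotient.mk Q '' {r : R | r - a' ∈ I'})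
        = ↑(Finset.univ.filter
          (fun x : R ⧸ Q => x - Ideal.Quotient.mk Q a' ∈ Ideal.map (Ideal.Quotient.mk Q) I')) := by
      ext x
      simp [hmemimg I' a' x]
    rw [hset, finsum_mem_coe_finset]
    exact h j hj a' I' hdvd
  intro j
  induction j with
  | zero =>
    intro _ a' I' hdvd
    have hle : Q ≤ I' := Ideal.dvd_iff_le.1 hdvd
    rw [Finset.Icc_eq_empty (by omega), Finset.filter_empty, Finset.prod_empty, mul_one]
    rw [Finset.sum_congr rfl (fun x _ => hμ0 x), Finset.sum_const, nsmul_eq_mul]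
    rw [coset_card' (Ideal.map (Ideal.Quotient.mk Q) I') (Ideal.Quotient.mk Q a')]
    haveI : Finite ((R ⧸ Q) ⧸ Ideal.map (Ideal.Quotient.mk Q) I') :=
      Finite.of_surjective _ Ideal.Quotient.mk_surjective
    haveI : Nonempty ((R ⧸ Q) ⧸ Ideal.map (Ideal.Quotient.mk Q) I') := ⟨0⟩
    haveI : Nonempty ↥(Ideal.map (Ideal.Quotient.mk Q) I') := ⟨⟨0, Submodule.zero_mem _⟩⟩
    have h2 : Nat.card ((R ⧸ Q) ⧸ Ideal.map (Ideal.Quotient.mk Q) I') = Nat.card (R ⧸ I') :=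
      Nat.card_congr (DoubleQuot.quotQuotEquivQuotOfLE hle).toEquiv
    have h1 : Nat.card (R ⧸ Q)
        = Nat.card (R ⧸ I') * Nat.card ↥(Ideal.map (Ideal.Quotient.mk Q) I') := by
      rw [Nat.card_eq_fintype_card, card_total (Ideal.map (Ideal.Quotient.mk Q) I'), h2]
    have hpos1 : 0 < Nat.card (R ⧸ I') := by rw [← h2]; exact Nat.card_pos
    have hpos2 : 0 < Nat.card ↥(Ideal.map (Ideal.Quotient.mk Q) I') := Nat.card_pos
    apply le_of_eq
    rw [h1]
    have e1 : ((Nat.card (R ⧸ I') * Nat.card ↥(Ideal.map (Ideal.Quotient.mk Q) I') : ℕ) : ℝ)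
        = (Nat.card (R ⧸ I') : ℝ) * (Nat.card ↥(Ideal.map (Ideal.Quotient.mk Q) I') : ℝ) := by
      push_cast; ring
    rw [e1]
    have hne1 : (Nat.card (R ⧸ I') : ℝ) ≠ 0 := by positivity
    have hne2 : (Nat.card ↥(Ideal.map (Ideal.Quotient.mk Q) I') : ℝ) ≠ 0 := by positivity
    field_simp
  | succ n ih =>
    intro hn a' I' hdvd
    have hn' : n ≤ J := by omega
    have hmem : n + 1 ∈ Finset.Icc 1 J := Finset.mem_Icc.2 ⟨by omega, hn⟩
    obtain ⟨hδ0, hδ2⟩ := hδ (n + 1) hmem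
    -- pointwise bound
    have hpw : ∀ x, μ (n + 1) x ≤ (1 - δ (n + 1))⁻¹ * μ n x := by
      intro x
      have hp := hμnonneg n hn' x
      have hα0 := hαnn n hn x
      have hδpos : (0 : ℝ) < 1 - δ (n + 1) := by linarith
      rw [hμ (n + 1) hmem x]
      simp only [Nat.add_sub_cancel]
      split_ifs with h1 h2
      · rw [mul_zero, zero_div]
        positivity
      · rw [mul_one, div_le_iff₀ (by linarith : (0 : ℝ) < 1 - α (n + 1) x)]
        have h3 : 1 - δ (n + 1) ≤ 1 - α (n + 1) x := by linarith
        calc μ n x = (1 - δ (n + 1))⁻¹ * μ n x * (1 - δ (n + 1)) := by field_simp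
          _ ≤ (1 - δ (n + 1))⁻¹ * μ n x * (1 - α (n + 1) x) := by
              apply mul_le_mul_of_nonneg_left h3 (by positivity)
      · have hαδ : δ (n + 1) ≤ α (n + 1) x := not_lt.1 h1
        rcases eq_or_lt_of_le hα0 with h0 | h0
        · rw [← h0]
          simp only [zero_mul, div_zero]
          positivity
        · rw [div_le_iff₀ (by positivity : (0 : ℝ) < α (n + 1) x * (1 - δ (n + 1)))]
          have key : (1 - δ (n + 1))⁻¹ * μ n x * (α (n + 1) x * (1 - δ (n + 1)))
              = μ n x * α (n + 1) x := by
            field_simp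
          rw [key]
          nlinarith [mul_nonneg hp hδ0]
      · have hαδ : δ (n + 1) ≤ α (n + 1) x := not_lt.1 h1
        rcases eq_or_lt_of_le hα0 with h0 | h0
        · rw [← h0]
          simp only [zero_mul, div_zero]
          positivity
        · rw [sub_zero, div_le_iff₀ (by positivity : (0 : ℝ) < α (n + 1) x * (1 - δ (n + 1)))]
          have key : (1 - δ (n + 1))⁻¹ * μ n x * (α (n + 1) x * (1 - δ (n + 1)))
              = μ n x * α (n + 1) x := by
            field_simp
          rw [key]
    -- the exact fibrewise bound when P (n+1) does not divide I'
    have hstep : ¬ P (n + 1) ∣ I' →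
        (∑ x ∈ Finset.univ.filter
            (fun x : R ⧸ Q => x - Ideal.Quotient.mk Q a' ∈ Ideal.map (Ideal.Quotient.mk Q) I'),
          μ (n + 1) x)
        ≤ ∑ x ∈ Finset.univ.filter
            (fun x : R ⧸ Q => x - Ideal.Quotient.mk Q a' ∈ Ideal.map (Ideal.Quotient.mk Q) I'),
          μ n x := by
      intro hnd
      set c := Ideal.Quotient.mk Q a' with hc
      set A := Ideal.map (Ideal.Quotient.mk Q) I' with hA
      set K := Ideal.map (Ideal.Quotient.mk Q) (Qp n) with hK
      set Hi := Ideal.map (Ideal.Quotient.mk Q) (Qp (n + 1)) with hHi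
      have hHK : Hi ≤ K := Ideal.map_mono (hQpmono n hn)
      -- coprimality and the saturation inclusion
      have hPprim := hPprime (n + 1) hmem
      have hPmax : (P (n + 1)).IsMaximal := Ideal.IsPrime.isMaximal hPprim.1 hPprim.2
      have hsup : I' ⊔ P (n + 1) = ⊤ := by
        by_contra hne
        have h3 := hPmax.eq_of_le hne le_sup_right
        exact hnd (Ideal.dvd_iff_le.2 (le_trans le_sup_left (le_of_eq h3.symm)))
      have hcop : I' ⊔ P (n + 1) ^ ν (n + 1) = ⊤ :=
        Ideal.isCoprime_iff_sup_eq.1 ((Ideal.isCoprime_iff_sup_eq.2 hsup).pow_right)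
      have hRsat : Qp n ≤ (I' ⊓ Qp n) ⊔ Qp (n + 1) := by
        have h1 : Qp (n + 1) = P (n + 1) ^ ν (n + 1) * Qp n := hQpstep n hn
        calc Qp n = (I' ⊔ P (n + 1) ^ ν (n + 1)) * Qp n := by rw [hcop, Ideal.top_mul]
          _ = I' * Qp n ⊔ P (n + 1) ^ ν (n + 1) * Qp n := by rw [Ideal.sup_mul]
          _ ≤ (I' ⊓ Qp n) ⊔ Qp (n + 1) := sup_le_sup Ideal.mul_le_inf (le_of_eq h1.symm)
      have hsat : K ≤ (A ⊓ K) ⊔ Hi := by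
        intro xb hxb
        obtain ⟨x0, hx0, rfl⟩ :=
          (Ideal.mem_map_iff_of_surjective _ Ideal.Quotient.mk_surjective).1 hxb
        obtain ⟨u, hu, v, hv, huv⟩ := Submodule.mem_sup.1 (hRsat hx0)
        have hu' := Submodule.mem_inf.1 hu
        rw [← huv, map_add]
        apply Ideal.add_mem
        · exact Submodule.mem_sup_left (Submodule.mem_inf.2
            ⟨Ideal.mem_map_of_mem _ hu'.1, Ideal.mem_map_of_mem _ hu'.2⟩)
        · exact Submodule.mem_sup_right (Ideal.mem_map_of_mem _ hv)
      -- fibrewise decomposition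
      set q2 := Ideal.Quotient.mk K with hq2
      set Cf := Finset.univ.filter (fun x : R ⧸ Q => x - c ∈ A) with hCf
      set T := Cf.image q2 with hT
      rw [← Finset.sum_fiberwise_of_maps_to (t := T) (g := q2)
          (fun x hx => Finset.mem_image_of_mem q2 hx) (μ (n + 1)),
        ← Finset.sum_fiberwise_of_maps_to (t := T) (g := q2)
          (fun x hx => Finset.mem_image_of_mem q2 hx) (μ n)]
      apply Finset.sum_le_sum
      intro y hy
      obtain ⟨z, hzC, hzq⟩ := Finset.mem_image.1 hy
      set s := Cf.filter (fun x => q2 x = y) with hs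
      have hxs : ∀ x ∈ s, x - z ∈ K := by
        intro x hx
        have h4 := (Finset.mem_filter.1 hx).2
        rw [← hzq] at h4
        exact (Ideal.Quotient.eq).1 h4
      have hzs : z ∈ s := Finset.mem_filter.2 ⟨hzC, hzq⟩
      have hp := hμnonneg n hn' z
      have hps : ∀ x ∈ s, μ n x = μ n z := fun x hx => (hμconst n hn' z x (hxs x hx)).symm
      have hαs : ∀ x ∈ s, α (n + 1) x = α (n + 1) z :=
        fun x hx => (hαconst n hn z x (hxs x hx)).symm
      -- identify the fibre as a coset intersection
      have hseq : s = Finset.univ.filter (fun x : R ⧸ Q => x - c ∈ A ∧ x - z ∈ K) := by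
        ext x
        simp only [hs, hCf, Finset.mem_filter, Finset.mem_univ, true_and]
        constructor
        · rintro ⟨h1, h2⟩
          refine ⟨h1, ?_⟩
          rw [← hzq] at h2
          exact (Ideal.Quotient.eq).1 h2
        · rintro ⟨h1, h2⟩
          refine ⟨h1, ?_⟩
          rw [← hzq]
          exact (Ideal.Quotient.eq).2 h2
      set Ff := Finset.univ.filter (fun x : R ⧸ Q => x - z ∈ K) with hFf
      set Bf := Finset.univ.filter (fun x : R ⧸ Q => x - z ∈ K ∧ x ∈ B (n + 1)) with hBf
      set sB := Finset.univ.filter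
        (fun x : R ⧸ Q => (x - c ∈ A ∧ x - z ∈ K) ∧ x ∈ B (n + 1)) with hsB
      have hnat : sB.card * Ff.card = Bf.card
          * (Finset.univ.filter (fun x : R ⧸ Q => x - c ∈ A ∧ x - z ∈ K)).card :=
        crux A Hi K hHK hsat (B (n + 1)) c z (fun x y hxy => hBsat n hn x y hxy)
      -- the value of α on the fibre
      have hFz : Fib n z = ↑Ff := by
        rw [hFib n hn' z]
        ext x
        simp [hFf, hK]
      have hFBz : (Fib n z ∩ B (n + 1) : Set (R ⧸ Q)) = ↑Bf := by
        rw [hFib n hn' z]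
        ext x
        simp [hBf, hK]
      have hαval : α (n + 1) z = (Bf.card : ℝ) / (Ff.card : ℝ) := by
        rw [hα (n + 1) hmem z]
        simp only [Nat.add_sub_cancel]
        rw [hFBz, hFz, Nat.card_coe_set_eq, Nat.card_coe_set_eq,
          Set.ncard_coe_finset, Set.ncard_coe_finset]
      have hFfpos : 0 < Ff.card := Finset.card_pos.2 ⟨z, by simp [hFf]⟩
      -- the B-part of the fibre
      set MB := s.filter (fun x => x ∈ B (n + 1)) with hMB
      set MN := s.filter (fun x => ¬ x ∈ B (n + 1)) with hMN
      have hMBsB : MB = sB := by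
        rw [hMB, hseq, Finset.filter_filter]
      have hcount : MB.card + MN.card = s.card :=
        Finset.card_filter_add_card_filter_not _
      have hMeq : ((MB.card : ℝ)) = α (n + 1) z * s.card := by
        have hscard : s.card
            = (Finset.univ.filter (fun x : R ⧸ Q => x - c ∈ A ∧ x - z ∈ K)).card := by
          rw [hseq]
        have hFne : (Ff.card : ℝ) ≠ 0 := by exact_mod_cast hFfpos.ne'
        rw [hαval, div_mul_eq_mul_div, eq_div_iff hFne]
        rw [hMBsB, hscard]
        exact_mod_cast hnat
      have hMNeq : ((MN.card : ℝ)) = (s.card : ℝ) - MB.card := by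
        have := hcount
        push_cast [← this]
        ring
      -- rewrite both sums
      have hRHS : ∑ x ∈ s, μ n x = (s.card : ℝ) * μ n z := by
        rw [Finset.sum_congr rfl hps, Finset.sum_const, nsmul_eq_mul]
      have hsplit : ∀ vB vN : ℝ, (∑ x ∈ s, if x ∈ B (n + 1) then vB else vN)
          = (MB.card : ℝ) * vB + (MN.card : ℝ) * vN := by
        intro vB vN
        rw [Finset.sum_ite, Finset.sum_const, Finset.sum_const, nsmul_eq_mul, nsmul_eq_mul]
      have hLHS : ∑ x ∈ s, μ (n + 1) x = ∑ x ∈ s, (if α (n + 1) z < δ (n + 1) then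
          (if x ∈ B (n + 1) then μ n z * 0 / (1 - α (n + 1) z)
            else μ n z * 1 / (1 - α (n + 1) z))
          else
          (if x ∈ B (n + 1) then μ n z * (α (n + 1) z - δ (n + 1)) / (α (n + 1) z * (1 - δ (n + 1)))
            else μ n z * (α (n + 1) z - 0) / (α (n + 1) z * (1 - δ (n + 1))))) := by
        apply Finset.sum_congr rfl
        intro x hx
        rw [hμ (n + 1) hmem x]
        simp only [Nat.add_sub_cancel]
        rw [hps x hx, hαs x hx]
        split_ifs <;> rfl
      rw [hLHS, hRHS]
      by_cases hcnd : α (n + 1) z < δ (n + 1)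
      · simp only [if_pos hcnd]
        rw [hsplit]
        have h1α : (0 : ℝ) < 1 - α (n + 1) z := by linarith
        apply le_of_eq
        rw [hMNeq, hMeq]
        rw [mul_zero, zero_div, mul_zero, zero_add, mul_one]
        field_simp
      · simp only [if_neg hcnd]
        rw [hsplit]
        have hαδ : δ (n + 1) ≤ α (n + 1) z := not_lt.1 hcnd
        rcases eq_or_lt_of_le (hαnn n hn z) with h0 | h0
        · have hα0' : α (n + 1) z = 0 := h0.symm
          have hδ00 : δ (n + 1) = 0 := by linarith
          rw [hα0', hδ00]
          have e0 : ∀ r : ℝ, μ n z * ((0 : ℝ) - r) / (0 * (1 - r)) = 0 := by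
            intro r
            rw [zero_mul, div_zero]
          rw [sub_zero] at *
          simp only [zero_mul, div_zero, mul_zero, add_zero, zero_add, sub_zero]
          have goalnn : (0 : ℝ) ≤ (s.card : ℝ) * μ n z := mul_nonneg (Nat.cast_nonneg _) hp
          -- remaining LHS terms are all zero
          nlinarith [goalnn]
        · apply le_of_eq
          rw [hMNeq, hMeq]
          have hαne : α (n + 1) z ≠ 0 := ne_of_gt h0
          have hδne : (1 : ℝ) - δ (n + 1) ≠ 0 := by linarith
          field_simp
          ring
    -- assemble the induction step
    have hICCf : Finset.Icc 1 (n + 1) = insert (n + 1) (Finset.Icc 1 n) := hICC n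
    have hnotmem : (n + 1) ∉ (Finset.Icc 1 n).filter (fun i => P i ∣ I') := by
      simp only [Finset.mem_filter, Finset.mem_Icc, not_and]
      omega
    by_cases hPd : P (n + 1) ∣ I'
    · have hfil : (Finset.Icc 1 (n + 1)).filter (fun i => P i ∣ I')
          = insert (n + 1) ((Finset.Icc 1 n).filter (fun i => P i ∣ I')) := by
        rw [hICCf, Finset.filter_insert, if_pos hPd]
      rw [hfil, Finset.prod_insert hnotmem]
      have hIH := ih hn' a' I' hdvd
      have hδinv : (0 : ℝ) ≤ (1 - δ (n + 1))⁻¹ := by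
        apply inv_nonneg.2
        linarith
      calc (∑ x ∈ Finset.univ.filter
            (fun x : R ⧸ Q => x - Ideal.Quotient.mk Q a' ∈ Ideal.map (Ideal.Quotient.mk Q) I'),
            μ (n + 1) x)
          ≤ ∑ x ∈ Finset.univ.filter
            (fun x : R ⧸ Q => x - Ideal.Quotient.mk Q a' ∈ Ideal.map (Ideal.Quotient.mk Q) I'),
            (1 - δ (n + 1))⁻¹ * μ n x := Finset.sum_le_sum (fun x _ => hpw x)
        _ = (1 - δ (n + 1))⁻¹ * ∑ x ∈ Finset.univ.filter
            (fun x : R ⧸ Q => x - Ideal.Quotient.mk Q a' ∈ Ideal.map (Ideal.Quotient.mk Q) I'),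
            μ n x := by rw [Finset.mul_sum]
        _ ≤ (1 - δ (n + 1))⁻¹ * ((1 / (Nat.card (R ⧸ I') : ℝ)) *
            ∏ i ∈ (Finset.Icc 1 n).filter (fun i => P i ∣ I'), (1 - δ i)⁻¹) :=
          mul_le_mul_of_nonneg_left hIH hδinv
        _ = (1 / (Nat.card (R ⧸ I') : ℝ)) * ((1 - δ (n + 1))⁻¹ *
            ∏ i ∈ (Finset.Icc 1 n).filter (fun i => P i ∣ I'), (1 - δ i)⁻¹) := by ring
    · have hfil : (Finset.Icc 1 (n + 1)).filter (fun i => P i ∣ I')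
          = (Finset.Icc 1 n).filter (fun i => P i ∣ I') := by
        rw [hICCf, Finset.filter_insert, if_neg hPd]
      rw [hfil]
      exact le_trans (hstep hPd) (ih hn' a' I' hdvd)
end

section
/- With the setup as in the context, assume moreover that δ_j > 0 for all 1 ≤ j ≤ J. Then each P_j is a probability mass function on R/Q: P_j(ā) ≥ 0 for all ā ∈ R/Q, and ∑_{ā ∈ R/Q} P_j(ā) = 1, for every 0 ≤ j ≤ J. -/
/-!
`P_j` is `P_{j-1}` times a weight depending only on `δ_j`, `α_j(ā)` and whether `ā ∈ B_j`.
Since `B_j` is a union of cosets of `Q_j ⊆ Q_{j-1}`, induction shows that `P_{j-1}` is constant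
on each fibre `F_{j-1}(ā)`, and so is `α_j`, the proportion of that fibre lying in `B_j`.
On such a fibre the weights average to one (when `α_j ≥ δ_j` we divide by `α_j`, which is
where `δ_j > 0` enters), so every step preserves the mass of each fibre of `π_{j-1}`.
-/

open scoped Classical

section

open Finset

noncomputable def distortionWeight (δ α : ℝ) (hit : Prop) [Decidable hit] : ℝ :=
  if α < δ then (if hit then 0 else 1) / (1 - α) else (α - if hit then δ else 0) / (α * (1 - δ))

lemma distortionWeight_nonneg {δ α : ℝ} (hδ : δ ≤ 1) (hα : 0 ≤ α) (hit : Prop) [Decidable hit] :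
    0 ≤ distortionWeight δ α hit := by
  unfold distortionWeight
  split_ifs <;> first | positivity | apply div_nonneg <;> nlinarith

lemma sum_distortionWeight_eq_card {ι : Type*} (s : Finset ι) (b : ι → Prop) [DecidablePred b]
    {δ : ℝ} (hδ₀ : 0 < δ) (hδ₁ : δ < 1) :
    ∑ y ∈ s, distortionWeight δ (#{y ∈ s | b y} / #s) (b y) = #s := by
  set α : ℝ := #{y ∈ s | b y} / #s with hα
  have hcard : (#{y ∈ s | ¬ b y} : ℝ) = #s - #{y ∈ s | b y} := by
    rw [← card_filter_add_card_filter_not (s := s) b]; push_cast; ring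
  have hsplit : ∀ y, distortionWeight δ α (b y) =
      if b y then distortionWeight δ α True else distortionWeight δ α False := by
    intro y; by_cases h : b y <;> simp [h]
  simp only [hsplit, sum_ite, sum_const, nsmul_eq_mul, hcard]
  rcases eq_or_ne (#s : ℝ) 0 with hs | hs
  · have : (#{y ∈ s | b y} : ℝ) = 0 := by
      norm_cast at hs ⊢; simp_all
    simp [hs, this]
  have hc : (#{y ∈ s | b y} : ℝ) = α * #s := by rw [hα]; field_simp
  unfold distortionWeight
  simp only [if_true, if_false, hc]
  split_ifs with h
  · have : 1 - α ≠ 0 := by linarith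
    field_simp; ring
  · have : α ≠ 0 := by linarith
    have : 1 - δ ≠ 0 := by linarith
    field_simp; ring

variable {X : Type*} [AddCommGroup X] [Fintype X]

noncomputable def cosetFinset (K : AddSubgroup X) (x : X) : Finset X := {y | y - x ∈ K}

@[simp]
lemma mem_cosetFinset {K : AddSubgroup X} {x y : X} : y ∈ cosetFinset K x ↔ y - x ∈ K := by
  simp [cosetFinset]

lemma cosetFinset_eq_of_sub_mem {K : AddSubgroup X} {x y : X} (h : y - x ∈ K) :
    cosetFinset K y = cosetFinset K x := by
  ext z
  simp only [mem_cosetFinset]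
  constructor
  · intro hz; simpa using K.add_mem hz h
  · intro hz; simpa using K.sub_mem hz h

lemma sum_mul_eq_sum_of_sum_cosetFinset (K : AddSubgroup X) {p w : X → ℝ}
    (hp : ∀ x y, y - x ∈ K → p y = p x)
    (hw : ∀ x, ∑ y ∈ cosetFinset K x, w y = #(cosetFinset K x)) :
    ∑ x, p x * w x = ∑ x, p x := by
  have hfib : ∀ x : X, ({y | (y : X ⧸ K) = x} : Finset X) = cosetFinset K x := by
    intro x; ext y; simp [QuotientAddGroup.eq_iff_sub_mem]
  have hmaps : ∀ x ∈ (univ : Finset X), (x : X ⧸ K) ∈ univ.image ((↑) : X → X ⧸ K) :=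
    fun x _ => mem_image_of_mem _ (mem_univ x)
  rw [← sum_fiberwise_of_maps_to hmaps, ← sum_fiberwise_of_maps_to hmaps]
  refine sum_congr rfl fun c hc => ?_
  obtain ⟨x, -, rfl⟩ := mem_image.mp hc
  have hconst : ∀ y ∈ cosetFinset K x, p y = p x := fun y hy => hp x y (mem_cosetFinset.mp hy)
  rw [hfib]
  calc ∑ y ∈ cosetFinset K x, p y * w y = p x * ∑ y ∈ cosetFinset K x, w y := by
        rw [mul_sum]; exact sum_congr rfl fun y hy => by rw [hconst y hy]
    _ = ∑ y ∈ cosetFinset K x, p y := by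
        rw [hw, sum_congr rfl hconst, sum_const, nsmul_eq_mul, mul_comm]

section Distortion

variable (J : ℕ) (K : ℕ → AddSubgroup X) (B : ℕ → Set X) (δ : ℕ → ℝ) (α μ : ℕ → X → ℝ)

structure IsDistortionChain : Prop where
  antitone : ∀ j < J, K (j + 1) ≤ K j
  mem_of_sub_mem : ∀ j < J, ∀ x y, y - x ∈ K (j + 1) → x ∈ B (j + 1) → y ∈ B (j + 1)
  alpha_eq : ∀ j < J, ∀ x,
    α (j + 1) x = #{y ∈ cosetFinset (K j) x | y ∈ B (j + 1)} / #(cosetFinset (K j) x)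
  zero : ∀ x, μ 0 x = 1 / Nat.card X
  succ : ∀ j < J, ∀ x,
    μ (j + 1) x = μ j x * distortionWeight (δ (j + 1)) (α (j + 1) x) (x ∈ B (j + 1))

variable {J K B δ α μ}

namespace IsDistortionChain

lemma alpha_eq_of_sub_mem (h : IsDistortionChain J K B δ α μ) {j : ℕ} (hj : j < J) {x y : X}
    (hxy : y - x ∈ K j) : α (j + 1) y = α (j + 1) x := by
  rw [h.alpha_eq j hj, h.alpha_eq j hj, cosetFinset_eq_of_sub_mem hxy]

lemma eq_of_sub_mem (h : IsDistortionChain J K B δ α μ) :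
    ∀ j ≤ J, ∀ x y, y - x ∈ K j → μ j y = μ j x := by
  intro j
  induction j with
  | zero => intro _ x y _; rw [h.zero, h.zero]
  | succ j ih =>
    intro hj x y hxy
    have hxy' : y - x ∈ K j := h.antitone j hj hxy
    have hBxy : y ∈ B (j + 1) ↔ x ∈ B (j + 1) :=
      ⟨h.mem_of_sub_mem j hj y x (by simpa using neg_mem hxy), h.mem_of_sub_mem j hj x y hxy⟩
    rw [h.succ j hj, h.succ j hj, ih (by omega) x y hxy', h.alpha_eq_of_sub_mem hj hxy']
    simp only [hBxy]

lemma nonneg (h : IsDistortionChain J K B δ α μ) (hδ : ∀ j < J, δ (j + 1) ≤ 1) :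
    ∀ j ≤ J, ∀ x, 0 ≤ μ j x := by
  intro j
  induction j with
  | zero => intro _ x; rw [h.zero]; positivity
  | succ j ih =>
    intro hj x
    rw [h.succ j hj]
    exact mul_nonneg (ih (by omega) x)
      (distortionWeight_nonneg (hδ j hj) (by rw [h.alpha_eq j hj]; positivity) _)

lemma sum_eq_one (h : IsDistortionChain J K B δ α μ)
    (hδ : ∀ j < J, 0 < δ (j + 1) ∧ δ (j + 1) < 1) : ∀ j ≤ J, ∑ x, μ j x = 1 := by
  intro j
  induction j with
  | zero =>
    intro _
    have : (Nat.card X : ℝ) ≠ 0 := by exact_mod_cast Nat.card_pos.ne'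
    simp [h.zero, Nat.card_eq_fintype_card] at this ⊢
  | succ j ih =>
    intro hj
    have hweights : ∀ x, ∑ y ∈ cosetFinset (K j) x,
        distortionWeight (δ (j + 1)) (α (j + 1) y) (y ∈ B (j + 1)) = #(cosetFinset (K j) x) := by
      intro x
      rw [sum_congr rfl fun y hy =>
        by rw [h.alpha_eq_of_sub_mem hj (mem_cosetFinset.mp hy)], h.alpha_eq j hj]
      exact sum_distortionWeight_eq_card _ _ (hδ j hj).1 (hδ j hj).2
    simp only [h.succ j hj]
    rw [sum_mul_eq_sum_of_sum_cosetFinset (K j) (h.eq_of_sub_mem j (by omega)) hweights,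
      ih (by omega)]

end IsDistortionChain

end Distortion

lemma natCard_coe_inter {ι : Type*} (s : Finset ι) (B : Set ι) :
    Nat.card ↥((s : Set ι) ∩ B) = #{y ∈ s | y ∈ B} := by
  rw [← Nat.card_eq_finsetCard]
  congr
  ext
  simp

lemma mem_iUnion_image_mk_of_sub_mem {R ι : Type*} [CommRing R] {Q L : Ideal R} {s : Set ι}
    {a : ι → R} {I : ι → Ideal R} (hL : ∀ i ∈ s, L ≤ I i) {x y : R ⧸ Q}
    (hxy : y - x ∈ L.map (Ideal.Quotient.mk Q))
    (hx : x ∈ ⋃ i ∈ s, Ideal.Quotient.mk Q '' {r | r - a i ∈ I i}) :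
    y ∈ ⋃ i ∈ s, Ideal.Quotient.mk Q '' {r | r - a i ∈ I i} := by
  obtain ⟨q, hq, hqxy⟩ :=
    (Ideal.mem_map_iff_of_surjective _ Ideal.Quotient.mk_surjective).mp hxy
  simp only [Set.mem_iUnion, Set.mem_image, Set.mem_ofPred_eq] at hx ⊢
  obtain ⟨i, hi, r, hr, rfl⟩ := hx
  refine ⟨i, hi, r + q, ?_, by rw [map_add, hqxy]; ring⟩
  simpa [add_sub_right_comm] using (I i).add_mem hr (hL i hi hq)

end

theorem stmt9_general
    -- R is a Dedekind domain (not a field) with all nontrivial quotients finite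
    (R : Type*) [CommRing R] [IsDedekindDomain R]
    (hfin : ∀ I : Ideal R, I ≠ ⊥ → Finite (R ⧸ I))
    -- the collection A = {a i + I i}
    (m : ℕ) (a : Fin m → R) (I : Fin m → Ideal R)
    -- Q = I_1 ∩ ⋯ ∩ I_m with prime factorization P_1^{ν_1} ⋯ P_J^{ν_J},
    -- |P_1| ≤ ⋯ ≤ |P_J|
    (Q : Ideal R)
    (J : ℕ) (P : ℕ → Ideal R) (ν : ℕ → ℕ)
    (hPprime : ∀ j ∈ Finset.Icc 1 J, (P j).IsPrime ∧ P j ≠ ⊥)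
    (hfact : Q = ∏ j ∈ Finset.Icc 1 J, P j ^ ν j)
    -- the partial products Q_j (so Q_0 = R)
    (Qp : ℕ → Ideal R) (hQp : ∀ j ≤ J, Qp j = ∏ i ∈ Finset.Icc 1 j, P i ^ ν i)
    -- the sets B_j ⊆ R/Q
    (B : ℕ → Set (R ⧸ Q))
    (hB : ∀ j ∈ Finset.Icc 1 J, B j =
      ⋃ i ∈ {i : Fin m | I i ∣ Qp j ∧ ¬ I i ∣ Qp (j - 1)},
        Ideal.Quotient.mk Q '' {r : R | r - a i ∈ I i})
    -- the fibres F_j(ā) of the projections π_j : R/Q → R/Q_j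
    (Fib : ℕ → (R ⧸ Q) → Set (R ⧸ Q))
    (hFib : ∀ j ≤ J, ∀ x, Fib j x =
      {y : R ⧸ Q | y - x ∈ Ideal.map (Ideal.Quotient.mk Q) (Qp j)})
    -- α_j(ā) = #(F_{j-1}(ā) ∩ B_j) / #F_{j-1}(ā)
    (α : ℕ → (R ⧸ Q) → ℝ)
    (hα : ∀ j ∈ Finset.Icc 1 J, ∀ x, α j x =
      (Nat.card ↥(Fib (j - 1) x ∩ B j) : ℝ) / (Nat.card ↥(Fib (j - 1) x) : ℝ))
    -- the distortion parameters δ_j ∈ [0, 1/2] with moreover δ_j > 0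
    (δ : ℕ → ℝ) (hδ : ∀ j ∈ Finset.Icc 1 J, 0 < δ j ∧ δ j ≤ 1 / 2)
    -- the distorted measures P_0, …, P_J
    (μ : ℕ → (R ⧸ Q) → ℝ)
    (hμ0 : ∀ x, μ 0 x = 1 / (Nat.card (R ⧸ Q) : ℝ))
    (hμ : ∀ j ∈ Finset.Icc 1 J, ∀ x, μ j x =
      if α j x < δ j then
        μ (j - 1) x * (if x ∈ B j then 0 else 1) / (1 - α j x)
      else
        μ (j - 1) x * (α j x - if x ∈ B j then δ j else 0) / (α j x * (1 - δ j)))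
    -- the conclusion: each P_j is a probability mass function on R/Q
    : ∀ j ≤ J, (∀ x : R ⧸ Q, 0 ≤ μ j x) ∧ (∑ᶠ x : R ⧸ Q, μ j x) = 1 := by
  have hQ₀ : Q ≠ ⊥ := by
    rw [hfact]
    exact Finset.prod_ne_zero_iff.mpr fun j hj => pow_ne_zero _ (hPprime j hj).2
  have := hfin Q hQ₀
  let _ : Fintype (R ⧸ Q) := Fintype.ofFinite _
  let K : ℕ → AddSubgroup (R ⧸ Q) := fun j =>
    (Ideal.map (Ideal.Quotient.mk Q) (Qp j)).toAddSubgroup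
  have hsucc : ∀ j < J, j + 1 ∈ Finset.Icc 1 J := fun j hj => by simp; omega
  have hK : ∀ j < J, K (j + 1) ≤ K j := fun j hj => Ideal.map_mono <| by
    rw [hQp _ hj, hQp _ hj.le, Finset.prod_Icc_succ_top (by omega)]
    exact Ideal.mul_le_left
  have hBK : ∀ j < J, ∀ x y, y - x ∈ K (j + 1) → x ∈ B (j + 1) → y ∈ B (j + 1) := by
    intro j hj x y hxy
    rw [hB (j + 1) (hsucc j hj)]
    exact mem_iUnion_image_mk_of_sub_mem (fun i hi => Ideal.le_of_dvd hi.1) hxy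
  have hαK : ∀ j < J, ∀ x,
      α (j + 1) x =
        ((cosetFinset (K j) x).filter (· ∈ B (j + 1))).card / (cosetFinset (K j) x).card := by
    intro j hj x
    have hFibK : Fib j x = cosetFinset (K j) x := by ext y; simp [hFib j hj.le, K]
    rw [hα (j + 1) (hsucc j hj), Nat.add_sub_cancel, hFibK, natCard_coe_inter,
      Nat.card_coe_set_eq, Set.ncard_coe_finset]
  have hδlt : ∀ j < J, 0 < δ (j + 1) ∧ δ (j + 1) < 1 := fun j hj => by
    have := hδ (j + 1) (hsucc j hj)
    constructor <;> linarith
  have hμK : ∀ j < J, ∀ x,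
      μ (j + 1) x = μ j x * distortionWeight (δ (j + 1)) (α (j + 1) x) (x ∈ B (j + 1)) := by
    intro j hj x
    rw [hμ (j + 1) (hsucc j hj), Nat.add_sub_cancel, distortionWeight]
    split_ifs <;> ring
  intro j hj
  rw [finsum_eq_sum_of_fintype]
  have h : IsDistortionChain J K B δ α μ := ⟨hK, hBK, hαK, hμ0, hμK⟩
  exact ⟨h.nonneg (fun j hj => (hδlt j hj).2.le) j hj, h.sum_eq_one hδlt j hj⟩

/-- If `δ_j > 0` for all `1 ≤ j ≤ J`, then each `P_j` is a probability mass function on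
`R/Q`: it is nonnegative and sums to `1`. -/
theorem stmt9
    -- R is a Dedekind domain (not a field) with all nontrivial quotients finite
    (R : Type*) [CommRing R] [IsDedekindDomain R] (hnotfield : ¬ IsField R)
    (hfin : ∀ I : Ideal R, I ≠ ⊥ → Finite (R ⧸ I))
    -- the collection A = {a i + I i}
    (m : ℕ) (a : Fin m → R) (I : Fin m → Ideal R)
    (hIbot : ∀ i, I i ≠ ⊥) (hItop : ∀ i, I i ≠ ⊤)
    -- Q = I_1 ∩ ⋯ ∩ I_m with prime factorization P_1^{ν_1} ⋯ P_J^{ν_J},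
    -- |P_1| ≤ ⋯ ≤ |P_J|
    (Q : Ideal R) (hQ : Q = ⨅ i, I i)
    (J : ℕ) (P : ℕ → Ideal R) (ν : ℕ → ℕ)
    (hPprime : ∀ j ∈ Finset.Icc 1 J, (P j).IsPrime ∧ P j ≠ ⊥)
    (hν : ∀ j ∈ Finset.Icc 1 J, 1 ≤ ν j)
    (hPinj : ∀ j ∈ Finset.Icc 1 J, ∀ k ∈ Finset.Icc 1 J, P j = P k → j = k)
    (hPord : ∀ j ∈ Finset.Icc 1 J, ∀ k ∈ Finset.Icc 1 J, j ≤ k →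
      Nat.card (R ⧸ P j) ≤ Nat.card (R ⧸ P k))
    (hfact : Q = ∏ j ∈ Finset.Icc 1 J, P j ^ ν j)
    -- the partial products Q_j (so Q_0 = R)
    (Qp : ℕ → Ideal R) (hQp : ∀ j ≤ J, Qp j = ∏ i ∈ Finset.Icc 1 j, P i ^ ν i)
    -- the sets B_j ⊆ R/Q
    (B : ℕ → Set (R ⧸ Q))
    (hB : ∀ j ∈ Finset.Icc 1 J, B j =
      ⋃ i ∈ {i : Fin m | I i ∣ Qp j ∧ ¬ I i ∣ Qp (j - 1)},
        Ideal.Quotient.mk Q '' {r : R | r - a i ∈ I i})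
    -- the fibres F_j(ā) of the projections π_j : R/Q → R/Q_j
    (Fib : ℕ → (R ⧸ Q) → Set (R ⧸ Q))
    (hFib : ∀ j ≤ J, ∀ x, Fib j x =
      {y : R ⧸ Q | y - x ∈ Ideal.map (Ideal.Quotient.mk Q) (Qp j)})
    -- α_j(ā) = #(F_{j-1}(ā) ∩ B_j) / #F_{j-1}(ā)
    (α : ℕ → (R ⧸ Q) → ℝ)
    (hα : ∀ j ∈ Finset.Icc 1 J, ∀ x, α j x =
      (Nat.card ↥(Fib (j - 1) x ∩ B j) : ℝ) / (Nat.card ↥(Fib (j - 1) x) : ℝ))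
    -- the distortion parameters δ_j ∈ [0, 1/2] with moreover δ_j > 0
    (δ : ℕ → ℝ) (hδ : ∀ j ∈ Finset.Icc 1 J, 0 < δ j ∧ δ j ≤ 1 / 2)
    -- the distorted measures P_0, …, P_J
    (μ : ℕ → (R ⧸ Q) → ℝ)
    (hμ0 : ∀ x, μ 0 x = 1 / (Nat.card (R ⧸ Q) : ℝ))
    (hμ : ∀ j ∈ Finset.Icc 1 J, ∀ x, μ j x =
      if α j x < δ j then
        μ (j - 1) x * (if x ∈ B j then 0 else 1) / (1 - α j x)
      else
        μ (j - 1) x * (α j x - if x ∈ B j then δ j else 0) / (α j x * (1 - δ j)))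
    -- the conclusion: each P_j is a probability mass function on R/Q
    : ∀ j ≤ J, (∀ x : R ⧸ Q, 0 ≤ μ j x) ∧ (∑ᶠ x : R ⧸ Q, μ j x) = 1 :=
  stmt9_general R hfin m a I Q J P ν hPprime hfact Qp hQp B hB Fib hFib α hα δ hδ μ hμ0 hμ
end

section
/- Let R be a Dedekind domain (not a field) such that R/I is finite for every nonzero ideal I, with norm |I| = #(R/I), and let ω(H) denote the number of distinct prime ideal divisors of a nonzero ideal H. Let Q' be a nonzero ideal with prime factorization Q' = P_1^{ν_1} ⋯ P_k^{ν_k} (P_1, …, P_k distinct prime ideals). Then ∑_{H_1 ∣ Q'} ∑_{H_2 ∣ Q'} 2^{ω(H_1 ∩ H_2)} / |H_1 ∩ H_2| ≤ ∏_{i=1}^{k} (1 + ∑_{ν=1}^{∞} (4ν + 2)/|P_i|^ν), where the sums over H_1, H_2 run over all ideal divisors of Q' (including R itself). -/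
/-!
The divisors of `Q' = ∏ Pᵢ^νᵢ` are the ideals `∏ Pᵢ^aᵢ` with `a ≤ ν`, and the intersection of the
divisors with exponent vectors `a` and `b` has exponent vector `max a b`. By the Chinese remainder
theorem both `ω` and the norm are multiplicative over the `Pᵢ`, so the double sum factors as
`∏ᵢ ∑_{a, b ≤ νᵢ} w(max a b)` with `w(0) = 1` and `w(m) = 2 / |Pᵢ|^m`. Exactly `2m + 1` pairs
have maximum `m`, so the `i`-th factor is `1 + ∑_{m=1}^{νᵢ} (4m + 2) / |Pᵢ|^m`, a partial sum of the
series on the right.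
-/

open Finset

theorem sum_piFinset_sum_piFinset_prod {ι κ S : Type*} [Fintype ι] [DecidableEq ι]
    [CommSemiring S] (t : ι → Finset κ) (f : ι → κ → κ → S) :
    ∑ a ∈ Fintype.piFinset t, ∑ b ∈ Fintype.piFinset t, ∏ i, f i (a i) (b i) =
      ∏ i, ∑ x ∈ t i, ∑ y ∈ t i, f i x y := by
  simp only [prod_univ_sum]

theorem sum_range_sum_range_max {M : Type*} [AddCommMonoid M] (g : ℕ → M) (n : ℕ) :
    ∑ a ∈ range (n + 1), ∑ b ∈ range (n + 1), g (max a b) =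
      ∑ m ∈ range (n + 1), (2 * m + 1) • g m := by
  induction n with
  | zero => simp
  | succ n ih =>
    have hrow : ∀ a ∈ range (n + 1), g (max a (n + 1)) = g (n + 1) := fun a ha => by
      rw [max_eq_right (mem_range.mp ha).le]
    have hcol : ∀ b ∈ range (n + 2), g (max (n + 1) b) = g (n + 1) := fun b hb => by
      rw [max_eq_left (Nat.lt_succ_iff.mp (mem_range.mp hb))]
    rw [sum_range_succ, sum_congr rfl fun a _ => sum_range_succ _ (n + 1), sum_add_distrib, ih,
      sum_congr rfl hrow, sum_congr rfl hcol, sum_const, sum_const, card_range, card_range,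
      sum_range_succ _ (n + 1), add_assoc, ← add_smul]
    congr 2
    ring

theorem exists_le_eq_prod_pow_of_dvd_prod_pow {M ι : Type*} [CommMonoidWithZero M]
    [IsCancelMulZero M] [DecompositionMonoid M] [Subsingleton Mˣ] {p : ι → M}
    (hp : ∀ i, Prime (p i)) (ν : ι → ℕ) (s : Finset ι) {N : M}
    (hN : N ∣ ∏ i ∈ s, p i ^ ν i) : ∃ a ≤ ν, N = ∏ i ∈ s, p i ^ a i := by
  classical
  induction s using Finset.induction_on generalizing N with
  | empty =>
    rw [prod_empty] at hN
    exact ⟨0, fun _ => Nat.zero_le _, by simpa using isUnit_iff_eq_one.mp (isUnit_of_dvd_one hN)⟩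
  | insert i s hi ih =>
    rw [prod_insert hi] at hN
    obtain ⟨d, N', hd, hN', rfl⟩ := exists_dvd_and_dvd_of_dvd_mul hN
    obtain ⟨c, hc, hdc⟩ := (dvd_prime_pow (hp i) _).mp hd
    obtain ⟨a, ha, rfl⟩ := ih hN'
    refine ⟨Function.update a i c, fun j => ?_, ?_⟩
    · rcases eq_or_ne j i with rfl | hj
      · simpa using hc
      · simpa [hj] using ha j
    · rw [prod_insert hi, Function.update_self, associated_iff_eq.mp hdc]
      congr 1
      exact prod_congr rfl fun j hj => by rw [Function.update_of_ne (ne_of_mem_of_not_mem hj hi)]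

namespace Ideal

variable {R ι : Type*} [CommRing R] [IsDedekindDomain R] {P : ι → Ideal R}

theorem isCoprime_pow_of_prime_of_ne {I J : Ideal R} (hI : Prime I) (hJ : Prime J)
    (hIJ : I ≠ J) (m n : ℕ) : IsCoprime (I ^ m) (J ^ n) :=
  .pow (isCoprime_iff_sup_eq.mpr (IsMaximal.coprime_of_ne
    ((isPrime_of_prime hI).isMaximal hI.ne_zero) ((isPrime_of_prime hJ).isMaximal hJ.ne_zero) hIJ))

theorem prime_pow_dvd_prod_pow_iff [Fintype ι] (hP : ∀ i, Prime (P i))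
    (hPinj : Function.Injective P) (a : ι → ℕ) (i : ι) (m : ℕ) :
    P i ^ m ∣ ∏ j, P j ^ a j ↔ m ≤ a i := by
  classical
  refine ⟨fun h => ?_, fun h => (pow_dvd_pow _ h).trans (dvd_prod_of_mem _ (mem_univ i))⟩
  rw [← mul_prod_erase _ _ (mem_univ i)] at h
  have hcop : IsCoprime (P i ^ m) (∏ j ∈ univ.erase i, P j ^ a j) :=
    IsCoprime.prod_right fun j hj =>
      isCoprime_pow_of_prime_of_ne (hP i) (hP j) (hPinj.ne (ne_of_mem_erase hj).symm) _ _
  exact (pow_dvd_pow_iff (hP i).ne_zero (hP i).not_isUnit).mp (hcop.dvd_of_dvd_mul_right h)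

theorem prod_pow_injective [Fintype ι] (hP : ∀ i, Prime (P i)) (hPinj : Function.Injective P) :
    Function.Injective fun a : ι → ℕ => ∏ j, P j ^ a j := by
  intro a b h
  funext i
  simp only at h
  refine le_antisymm ?_ ?_
  · rw [← prime_pow_dvd_prod_pow_iff hP hPinj b i, ← h]
    exact dvd_prod_of_mem _ (mem_univ i)
  · rw [← prime_pow_dvd_prod_pow_iff hP hPinj a i, h]
    exact dvd_prod_of_mem _ (mem_univ i)

theorem setOf_dvd_prod_pow [Fintype ι] [DecidableEq ι] (hP : ∀ i, Prime (P i)) (ν : ι → ℕ) :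
    {N : Ideal R | N ∣ ∏ j, P j ^ ν j} =
      (fun a : ι → ℕ => ∏ j, P j ^ a j) '' ↑(Fintype.piFinset fun i => range (ν i + 1)) := by
  ext N
  simp only [Set.mem_image, mem_coe, Fintype.mem_piFinset, mem_range, Nat.lt_succ_iff]
  constructor
  · intro hN
    obtain ⟨a, ha, rfl⟩ := exists_le_eq_prod_pow_of_dvd_prod_pow hP ν univ hN
    exact ⟨a, ha, rfl⟩
  · rintro ⟨a, ha, rfl⟩
    exact prod_dvd_prod_of_dvd _ _ fun j _ => pow_dvd_pow _ (ha j)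

theorem prod_pow_inf_prod_pow [Fintype ι] (hP : ∀ i, Prime (P i))
    (hPinj : Function.Injective P) (a b : ι → ℕ) :
    (∏ j, P j ^ a j) ⊓ ∏ j, P j ^ b j = ∏ j, P j ^ max (a j) (b j) := by
  have hinf (m : ι → ℕ) : univ.inf (fun j => P j ^ m j) = ∏ j, P j ^ m j :=
    IsDedekindDomain.inf_pow_eq_prod_of_prime _ _ _ (fun i _ => hP i)
      fun i _ j _ hij => hPinj.ne hij
  rw [← hinf, ← hinf, ← hinf, ← inf_inf]
  refine inf_congr rfl fun j _ => ?_
  rcases le_total (a j) (b j) with h | h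
  · rw [max_eq_right h]
    exact inf_eq_right.mpr (pow_le_pow_right h)
  · rw [max_eq_left h]
    exact inf_eq_left.mpr (pow_le_pow_right h)

theorem card_quotient_prod_pow [Fintype ι] (hP : ∀ i, Prime (P i))
    (hPinj : Function.Injective P) (m : ι → ℕ) :
    Nat.card (R ⧸ ∏ j, P j ^ m j) = ∏ j, Nat.card (R ⧸ P j) ^ m j := by
  rw [Nat.card_congr (IsDedekindDomain.quotientEquivPiOfProdEq _ P m hP
    (fun i j hij => hPinj.ne hij) rfl).toEquiv, Nat.card_pi]
  refine prod_congr rfl fun j _ => ?_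
  have := isPrime_of_prime (hP j)
  simp only [← Submodule.cardQuot_apply]
  exact cardQuot_pow_of_prime (hP j).ne_zero

theorem card_primes_dvd_prod_pow [Fintype ι] (hP : ∀ i, Prime (P i))
    (hPinj : Function.Injective P) (m : ι → ℕ) :
    Nat.card {Q : Ideal R // Q.IsPrime ∧ Q ∣ ∏ j, P j ^ m j} = #{i | m i ≠ 0} := by
  have hne : ∏ j, P j ^ m j ≠ ⊥ := prod_ne_zero_iff.mpr fun j _ => pow_ne_zero _ (hP j).ne_zero
  have hset : {Q : Ideal R | Q.IsPrime ∧ Q ∣ ∏ j, P j ^ m j} = P '' {i | m i ≠ 0} := by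
    ext Q
    simp only [Set.mem_image]
    constructor
    · rintro ⟨hQ, hdvd⟩
      have hQ' : Prime Q :=
        prime_of_isPrime (by rintro rfl; exact hne (zero_dvd_iff.mp hdvd)) hQ
      obtain ⟨j, -, hj⟩ := (hQ'.dvd_finsetProd_iff _).mp hdvd
      have hmj : m j ≠ 0 := fun h0 => hQ'.not_isUnit (isUnit_of_dvd_one (by simpa [h0] using hj))
      exact ⟨j, hmj, (associated_iff_eq.mp ((hQ'.dvd_prime_iff_associated (hP j)).mp
        (hQ'.dvd_of_dvd_pow hj))).symm⟩
    · rintro ⟨i, hi, rfl⟩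
      exact ⟨isPrime_of_prime (hP i),
        (dvd_pow_self _ hi).trans (dvd_prod_of_mem (fun j => P j ^ m j) (mem_univ i))⟩
  rw [← Set.coe_ofPred, hset, Nat.card_image_of_injective hPinj, Set.coe_ofPred,
    Nat.card_eq_fintype_card, Fintype.card_subtype]

end Ideal

noncomputable def localWeight (q : ℝ) (m : ℕ) : ℝ := (if m = 0 then 1 else 2) / q ^ m

theorem localWeight_nonneg {q : ℝ} (hq : 0 ≤ q) (m : ℕ) : 0 ≤ localWeight q m := by
  unfold localWeight
  positivity

theorem two_pow_card_div_prod_pow_eq_prod_localWeight {ι : Type*} [Fintype ι] (q : ι → ℝ)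
    (m : ι → ℕ) : (2 : ℝ) ^ #{i | m i ≠ 0} / ∏ i, q i ^ m i = ∏ i, localWeight (q i) (m i) := by
  rw [← prod_const, prod_filter, ← prod_div_distrib]
  refine prod_congr rfl fun i _ => ?_
  by_cases h : m i = 0 <;> simp [localWeight, h]

theorem sum_range_sum_range_localWeight (q : ℝ) (n : ℕ) :
    ∑ a ∈ range (n + 1), ∑ b ∈ range (n + 1), localWeight q (max a b) =
      1 + ∑ m ∈ range n, (4 * ((m : ℝ) + 1) + 2) / q ^ (m + 1) := by
  rw [sum_range_sum_range_max, sum_range_succ', add_comm]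
  congr 1
  · simp [localWeight]
  · refine sum_congr rfl fun m _ => ?_
    simp only [localWeight, Nat.add_one_ne_zero, if_false, nsmul_eq_mul]
    push_cast
    ring

theorem summable_weighted_geometric {q : ℝ} (hq : 1 < q) :
    Summable fun n : ℕ => (4 * ((n : ℝ) + 1) + 2) / q ^ (n + 1) := by
  have hr : ‖q⁻¹‖ < 1 := by
    rw [norm_inv, Real.norm_of_nonneg (by linarith)]
    exact inv_lt_one_of_one_lt₀ hq
  have h := ((summable_pow_mul_geometric_of_norm_lt_one 1 hr).mul_left 4).add
    ((summable_geometric_of_norm_lt_one hr).mul_left 2)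
  refine ((summable_nat_add_iff 1).mpr h).congr fun n => ?_
  simp only [pow_one, Nat.cast_add, Nat.cast_one, inv_pow]
  field_simp

theorem sum_range_sum_range_localWeight_le {q : ℝ} (hq : 1 < q) (n : ℕ) :
    ∑ a ∈ range (n + 1), ∑ b ∈ range (n + 1), localWeight q (max a b) ≤
      1 + ∑' m : ℕ, (4 * ((m : ℝ) + 1) + 2) / q ^ (m + 1) := by
  rw [sum_range_sum_range_localWeight]
  have : 0 < q := by linarith
  gcongr
  exact (summable_weighted_geometric hq).sum_le_tsum _ fun m _ => by positivity

theorem stmt11_general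
    (R : Type*) [CommRing R] [IsDedekindDomain R]
    (hfin : ∀ I : Ideal R, I ≠ ⊥ → Finite (R ⧸ I))
    (Q' : Ideal R)
    (k : ℕ) (P : Fin k → Ideal R) (ν : Fin k → ℕ)
    (hPprime : ∀ i, (P i).IsPrime ∧ P i ≠ ⊥)
    (hPinj : Function.Injective P)
    (hfact : Q' = ∏ i, P i ^ ν i) :
    (∑ᶠ H₁ ∈ {H : Ideal R | H ∣ Q'}, ∑ᶠ H₂ ∈ {H : Ideal R | H ∣ Q'},
        (2 : ℝ) ^ Nat.card {P' : Ideal R // P'.IsPrime ∧ P' ∣ H₁ ⊓ H₂} /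
          (Nat.card (R ⧸ (H₁ ⊓ H₂)) : ℝ)) ≤
      ∏ i, (1 + ∑' n : ℕ, (4 * ((n : ℝ) + 1) + 2) / (Nat.card (R ⧸ P i) : ℝ) ^ (n + 1)) := by
  have hP (i : Fin k) : Prime (P i) := Ideal.prime_of_isPrime (hPprime i).2 (hPprime i).1
  have hnorm (i : Fin k) : 1 < (Nat.card (R ⧸ P i) : ℝ) := by
    have := hfin _ (hPprime i).2
    have := Ideal.Quotient.nontrivial_iff.mpr (hPprime i).1.ne_top
    exact_mod_cast Finite.one_lt_card_iff_nontrivial.mpr this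
  rw [hfact, Ideal.setOf_dvd_prod_pow hP]
  simp only [finsum_mem_image (Ideal.prod_pow_injective hP hPinj).injOn, finsum_mem_coe_finset,
    Ideal.prod_pow_inf_prod_pow hP hPinj, Ideal.card_primes_dvd_prod_pow hP hPinj,
    Ideal.card_quotient_prod_pow hP hPinj, Nat.cast_prod, Nat.cast_pow,
    two_pow_card_div_prod_pow_eq_prod_localWeight]
  rw [sum_piFinset_sum_piFinset_prod _ fun i x y => localWeight (Nat.card (R ⧸ P i)) (max x y)]
  refine prod_le_prod (fun i _ => ?_) fun i _ => sum_range_sum_range_localWeight_le (hnorm i) _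
  exact sum_nonneg fun a _ => sum_nonneg fun b _ => localWeight_nonneg (Nat.cast_nonneg _) _

/-- In a Dedekind domain with finite nontrivial quotients, for a nonzero ideal
`Q' = P_1^{ν_1} ⋯ P_k^{ν_k}`,
`∑_{H₁ ∣ Q'} ∑_{H₂ ∣ Q'} 2^{ω(H₁ ∩ H₂)}/|H₁ ∩ H₂| ≤ ∏_{i=1}^k (1 + ∑_{ν ≥ 1} (4ν+2)/|P_i|^ν)`,
where `ω(H)` is the number of distinct prime ideal divisors of `H`. -/
theorem stmt11
    (R : Type*) [CommRing R] [IsDedekindDomain R] (hnotfield : ¬ IsField R)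
    (hfin : ∀ I : Ideal R, I ≠ ⊥ → Finite (R ⧸ I))
    (Q' : Ideal R) (hQ' : Q' ≠ ⊥)
    (k : ℕ) (P : Fin k → Ideal R) (ν : Fin k → ℕ)
    (hPprime : ∀ i, (P i).IsPrime ∧ P i ≠ ⊥) (hν : ∀ i, 1 ≤ ν i)
    (hPinj : Function.Injective P)
    (hfact : Q' = ∏ i, P i ^ ν i) :
    (∑ᶠ H₁ ∈ {H : Ideal R | H ∣ Q'}, ∑ᶠ H₂ ∈ {H : Ideal R | H ∣ Q'},
        (2 : ℝ) ^ Nat.card {P' : Ideal R // P'.IsPrime ∧ P' ∣ H₁ ⊓ H₂} /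
          (Nat.card (R ⧸ (H₁ ⊓ H₂)) : ℝ)) ≤
      ∏ i, (1 + ∑' n : ℕ, (4 * ((n : ℝ) + 1) + 2) / (Nat.card (R ⧸ P i) : ℝ) ^ (n + 1)) :=
  stmt11_general R hfin Q' k P ν hPprime hPinj hfact
end

section
/- Let q ≥ 700 be a prime power and let 𝔽_q be the field with q elements. Then ∑_{P} (deg P)^6 · q^{−2·deg P} ≤ 1.13/q, where the (convergent) sum runs over all monic irreducible polynomials P ∈ 𝔽_q[x]. -/
/-!
There are `q ^ n` monic polynomials of degree `n` over `𝔽_q`, so dropping irreducibility bounds the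
sum by `∑ n⁶ xⁿ` with `x = 1/q`. The term `n = 1` contributes `x`; by Bernoulli's inequality
`n / 2 ≤ (3/2) ^ (n - 2)` for `n ≥ 2`, so the rest is dominated by the geometric series
`64 x² ∑ (729 x / 64) ^ m`, which is below `0.13 x` once `x ≤ 1/700`.
-/

open Polynomial

namespace Polynomial

variable {R : Type*} [Semiring R]

noncomputable def ofLowerCoeffs (c : Σ n, Fin n → R) : R[X] :=
  X ^ c.1 + ∑ i : Fin c.1, C (c.2 i) * X ^ (i : ℕ)

lemma ofLowerCoeffs_natDegree_coeff {P : R[X]} (hP : P.Monic) :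
    ofLowerCoeffs ⟨P.natDegree, fun i => P.coeff i⟩ = P := by
  rw [ofLowerCoeffs, Fin.sum_univ_eq_sum_range (fun i => C (P.coeff i) * X ^ i), ← hP.as_sum]

lemma injOn_natDegree_coeff_monic :
    Set.InjOn (fun P : R[X] => (⟨P.natDegree, fun i => P.coeff i⟩ : Σ n, Fin n → R))
      {P | P.Monic} :=
  Set.LeftInvOn.injOn (f₁' := ofLowerCoeffs) fun _ hP => ofLowerCoeffs_natDegree_coeff hP

lemma tsum_le_tsum_mul_card_pow_of_monic [Fintype R] {p : R[X] → Prop}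
    (hp : ∀ P, p P → P.Monic) {f : ℕ → ℝ} (hf : ∀ n, 0 ≤ f n)
    (hsum : Summable fun n => f n * (Fintype.card R : ℝ) ^ n) :
    ∑' P : {P // p P}, f (P : R[X]).natDegree ≤ ∑' n, f n * (Fintype.card R : ℝ) ^ n := by
  set e : {P // p P} → Σ n, Fin n → R := fun P => ⟨(P : R[X]).natDegree, fun i => P.1.coeff i⟩
  have he : Function.Injective e := fun P Q h =>
    Subtype.ext (injOn_natDegree_coeff_monic (hp _ P.2) (hp _ Q.2) h)
  have hfiber : ∀ n, ∑' _ : Fin n → R, f n = f n * (Fintype.card R : ℝ) ^ n := fun n => by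
    simp [tsum_fintype, mul_comm]
  have hg : Summable fun c : Σ n, Fin n → R => f c.1 :=
    (summable_sigma_of_nonneg fun c => hf c.1).2
      ⟨fun _ => Summable.of_finite, by simpa only [hfiber] using hsum⟩
  calc ∑' P : {P // p P}, f (P : R[X]).natDegree
      ≤ ∑' c : Σ n, Fin n → R, f c.1 :=
        Summable.tsum_le_tsum_of_inj e he (fun c _ => hf c.1) (fun _ => le_rfl)
          (hg.comp_injective he) hg
    _ = ∑' n, f n * (Fintype.card R : ℝ) ^ n := by rw [hg.tsum_sigma]; exact tsum_congr hfiber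

end Polynomial

lemma nat_add_two_pow_six_le (m : ℕ) : ((m + 2 : ℕ) : ℝ) ^ 6 ≤ 64 * (729 / 64) ^ m := by
  have bernoulli : 1 + m * (1 / 2 : ℝ) ≤ (1 + 1 / 2) ^ m := one_add_mul_le_pow (by norm_num) m
  calc ((m + 2 : ℕ) : ℝ) ^ 6 = 64 * (1 + m * (1 / 2 : ℝ)) ^ 6 := by push_cast; ring
    _ ≤ 64 * ((1 + 1 / 2) ^ m) ^ 6 := by gcongr
    _ = 64 * (729 / 64) ^ m := by rw [← pow_mul, pow_mul']; norm_num

lemma tsum_pow_six_mul_pow_le {x : ℝ} (hx0 : 0 ≤ x) (hx : x < 64 / 729) :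
    ∑' n : ℕ, (n : ℝ) ^ 6 * x ^ n ≤ x + 64 * x ^ 2 * (1 - 729 / 64 * x)⁻¹ := by
  have hr0 : 0 ≤ 729 / 64 * x := by positivity
  have hr1 : 729 / 64 * x < 1 := by linarith
  have hsum : Summable fun n : ℕ => (n : ℝ) ^ 6 * x ^ n :=
    summable_pow_mul_geometric_of_norm_lt_one 6 (by rw [Real.norm_of_nonneg hx0]; linarith)
  have htail (m : ℕ) : ((m + 2 : ℕ) : ℝ) ^ 6 * x ^ (m + 2) ≤ 64 * x ^ 2 * (729 / 64 * x) ^ m :=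
    calc ((m + 2 : ℕ) : ℝ) ^ 6 * x ^ (m + 2)
        ≤ 64 * (729 / 64) ^ m * x ^ (m + 2) := by gcongr; exact nat_add_two_pow_six_le m
      _ = 64 * x ^ 2 * (729 / 64 * x) ^ m := by ring
  have hgeom := (summable_geometric_of_lt_one hr0 hr1).mul_left (64 * x ^ 2)
  rw [← hsum.sum_add_tsum_nat_add 2, ← tsum_geometric_of_lt_one hr0 hr1, ← tsum_mul_left]
  refine add_le_add (by simp [Finset.sum_range_succ]) ?_
  exact Summable.tsum_le_tsum htail ((summable_nat_add_iff 2).2 hsum) hgeom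

theorem stmt15_general (q : ℕ) (hq700 : 700 ≤ q)
    (F : Type*) [Field F] [Fintype F] (hF : Fintype.card F = q) :
    (∑' P : {P : Polynomial F // P.Monic ∧ Irreducible P},
        ((P : Polynomial F).natDegree : ℝ) ^ 6 *
          ((q : ℝ) ^ (2 * (P : Polynomial F).natDegree))⁻¹) ≤ 1.13 / q := by
  have hq : (700 : ℝ) ≤ q := by exact_mod_cast hq700
  set x : ℝ := (q : ℝ)⁻¹ with hx
  have hx0 : 0 < x := by positivity
  have hx700 : x ≤ 1 / 700 := by rw [hx, one_div]; exact inv_anti₀ (by norm_num) hq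
  have hterm (n : ℕ) : (n : ℝ) ^ 6 * ((q : ℝ) ^ (2 * n))⁻¹ * (Fintype.card F : ℝ) ^ n
      = n ^ 6 * x ^ n := by
    rw [hF, hx, two_mul, pow_add, inv_pow]
    field_simp
  have hsum : Summable fun n : ℕ => (n : ℝ) ^ 6 * x ^ n :=
    summable_pow_mul_geometric_of_norm_lt_one 6 (by rw [Real.norm_of_nonneg hx0.le]; linarith)
  have htail : 64 * x ^ 2 * (1 - 729 / 64 * x)⁻¹ ≤ 0.13 * x := by
    rw [mul_inv_le_iff₀ (by linarith)]
    nlinarith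
  calc _ ≤ ∑' n : ℕ, (n : ℝ) ^ 6 * ((q : ℝ) ^ (2 * n))⁻¹ * (Fintype.card F : ℝ) ^ n :=
        tsum_le_tsum_mul_card_pow_of_monic (f := fun n => (n : ℝ) ^ 6 * ((q : ℝ) ^ (2 * n))⁻¹)
          (fun _ hP => hP.1) (fun _ => by positivity)
          (by simpa only [hterm] using hsum)
    _ = ∑' n : ℕ, (n : ℝ) ^ 6 * x ^ n := tsum_congr hterm
    _ ≤ x + 64 * x ^ 2 * (1 - 729 / 64 * x)⁻¹ := tsum_pow_six_mul_pow_le hx0.le (by linarith)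
    _ ≤ 1.13 * x := by linarith
    _ = 1.13 / q := by rw [hx, div_eq_mul_inv]

/-- For `q ≥ 700`: `∑_P (deg P)⁶/|P|² ≤ 1.13/q`, the sum being over all monic
irreducible polynomials `P ∈ 𝔽_q[x]`. -/
theorem stmt15 (q : ℕ) (hq : IsPrimePow q) (hq700 : 700 ≤ q)
    (F : Type*) [Field F] [Fintype F] (hF : Fintype.card F = q) :
    (∑' P : {P : Polynomial F // P.Monic ∧ Irreducible P},
        ((P : Polynomial F).natDegree : ℝ) ^ 6 *
          ((q : ℝ) ^ (2 * (P : Polynomial F).natDegree))⁻¹) ≤ 1.13 / q :=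
  stmt15_general q hq700 F hF
end
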